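/- arXiv:1804.02651 — 6 statements merged into one kernel-verified Lean document; each statement's English description precedes it below -/
import Mathlib

section
/- For any probability vector p with decreasing components and p₂ < p₁, and any β' ≥ β ≥ 1, the vector p^(β) (with components proportional to (p_i/p₁)^β) is majorized by p^(β') (components proportional to (p_i/p₁)^{β'}). -/
/-!
Write `x i = p i / p₀`. For `i ≤ j` we have `x j ≤ x i`, hence
`x i ^ β * x j ^ β' ≤ x i ^ β' * x j ^ β` when `β ≤ β'`: raising to a larger power moves
relative mass towards the large components. Summing this cross inequality over `i` in an initial
segment and `j` outside it compares the masses of the segment under the two normalisations.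
-/

open Finset

theorem sum_mul_sum_univ_le_of_cross_le {ι R : Type*} [Fintype ι] [DecidableEq ι]
    [CommSemiring R] [PartialOrder R] [IsOrderedRing R] (s : Finset ι) (f g : ι → R)
    (hcross : ∀ i ∈ s, ∀ j ∉ s, f i * g j ≤ g i * f j) :
    (∑ i ∈ s, f i) * ∑ i, g i ≤ (∑ i ∈ s, g i) * ∑ i, f i := by
  rw [← sum_add_sum_compl s g, ← sum_add_sum_compl s f, mul_add, mul_add]
  refine add_le_add (mul_comm _ _).le ?_
  rw [sum_mul_sum, sum_mul_sum]
  exact sum_le_sum fun i hi => sum_le_sum fun j hj => hcross i hi j (mem_compl.mp hj)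

theorem sum_div_sum_univ_le_of_cross_le {ι : Type*} [Fintype ι] [DecidableEq ι]
    (s : Finset ι) (f g : ι → ℝ) (hf : 0 < ∑ i, f i) (hg : 0 < ∑ i, g i)
    (hcross : ∀ i ∈ s, ∀ j ∉ s, f i * g j ≤ g i * f j) :
    ∑ i ∈ s, f i / ∑ j, f j ≤ ∑ i ∈ s, g i / ∑ j, g j := by
  rw [← sum_div, ← sum_div, div_le_div_iff₀ hf hg]
  exact sum_mul_sum_univ_le_of_cross_le s f g hcross

theorem Real.rpow_mul_rpow_le_of_le {x y β β' : ℝ} (hy : 0 < y) (hyx : y ≤ x) (hββ' : β ≤ β') :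
    x ^ β * y ^ β' ≤ x ^ β' * y ^ β := by
  have hx : 0 < x := hy.trans_le hyx
  have hgap : y ^ (β' - β) ≤ x ^ (β' - β) := rpow_le_rpow hy.le hyx (by linarith)
  calc x ^ β * y ^ β' = x ^ β * y ^ β * y ^ (β' - β) := by
        rw [mul_assoc, ← rpow_add hy, add_sub_cancel]
    _ ≤ x ^ β * y ^ β * x ^ (β' - β) := by gcongr
    _ = x ^ β' * y ^ β := by
        rw [mul_right_comm, ← rpow_add hx, add_sub_cancel]

theorem sum_rpow_div_sum_rpow_le_of_isLowerSet {ι : Type*} [Fintype ι] [LinearOrder ι]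
    [Nonempty ι] (x : ι → ℝ) (hpos : ∀ i, 0 < x i) (hanti : Antitone x)
    (s : Finset ι) (hs : IsLowerSet (s : Set ι)) {β β' : ℝ} (hββ' : β ≤ β') :
    ∑ i ∈ s, x i ^ β / ∑ j, x j ^ β ≤ ∑ i ∈ s, x i ^ β' / ∑ j, x j ^ β' := by
  have hsum_pos (t : ℝ) : 0 < ∑ j, x j ^ t :=
    sum_pos (fun j _ => Real.rpow_pos_of_pos (hpos j) t) univ_nonempty
  refine sum_div_sum_univ_le_of_cross_le s _ _ (hsum_pos β) (hsum_pos β') fun i hi j hj => ?_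
  have hij : i ≤ j := le_of_not_ge fun hji => hj (hs hji hi)
  exact Real.rpow_mul_rpow_le_of_le (hpos j) (hanti hij) hββ'

/-- For a decreasingly ordered positive probability vector `p` with
`p₂ < p₁` and `β' ≥ β ≥ 1`, the vector `p^(β)` (components proportional to
`(p_i/p₁)^β`) is majorized by `p^(β')`: all partial sums of `p^(β)` are
bounded by those of `p^(β')`. -/
theorem stmt_1 (r : ℕ) (hr : 2 ≤ r) (p : Fin r → ℝ)
    (hpos : ∀ i, 0 < p i) (hanti : Antitone p)
    (β β' : ℝ) (hββ' : β ≤ β') :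
    ∀ k : ℕ,
      ∑ i ∈ Finset.univ.filter (fun i : Fin r => (i : ℕ) < k),
        (p i / p ⟨0, by omega⟩) ^ β / (∑ j, (p j / p ⟨0, by omega⟩) ^ β)
      ≤ ∑ i ∈ Finset.univ.filter (fun i : Fin r => (i : ℕ) < k),
        (p i / p ⟨0, by omega⟩) ^ β' / (∑ j, (p j / p ⟨0, by omega⟩) ^ β') := by
  intro k
  have : NeZero r := ⟨by omega⟩
  have hp₀ : 0 < p ⟨0, by omega⟩ := hpos _
  have hs : IsLowerSet (univ.filter (fun i : Fin r => (i : ℕ) < k) : Set (Fin r)) :=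
    fun i j hji hj => by
      simp only [coe_filter, mem_univ, true_and, Set.mem_ofPred_eq] at hj ⊢
      exact lt_of_le_of_lt (Fin.le_def.mp hji) hj
  exact sum_rpow_div_sum_rpow_le_of_isLowerSet _ (fun i => div_pos (hpos i) hp₀)
    (fun i j hij => div_le_div_of_nonneg_right (hanti hij) hp₀.le) _ hs hββ'
end

section
/- For a pure state |ψ⟩ = ∑_i √p_i |i⟩_A ⊗ |i⟩_B with Schmidt coefficients √p_i in decreasing order, the Bures-distance-based correlation measure C^(D_B)(|ψ⟩⟨ψ|) = inf over product density operators δ_A ⊗ δ_B of √(2 - 2⟨ψ|δ_A⊗δ_B|ψ⟩^{1/2}) equals √(2(1 - √p₁)). -/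
open Matrix Kronecker ComplexOrder

section Aux

theorem stmt6_factor {NA NB : ℕ} (u1 u2 : Fin NA → ℂ) (v1 v2 : Fin NB → ℂ)
    (δA : Matrix (Fin NA) (Fin NA) ℂ) (δB : Matrix (Fin NB) (Fin NB) ℂ) :
    star (fun x : Fin NA × Fin NB => u1 x.1 * v1 x.2) ⬝ᵥ
      ((δA ⊗ₖ δB) *ᵥ fun x : Fin NA × Fin NB => u2 x.1 * v2 x.2)
    = (star u1 ⬝ᵥ (δA *ᵥ u2)) * (star v1 ⬝ᵥ (δB *ᵥ v2)) := by
  simp only [dotProduct, mulVec, kroneckerMap_apply, Pi.star_apply, Fintype.sum_prod_type,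
    Finset.mul_sum, Finset.sum_mul]
  rw [Finset.sum_comm]
  refine Finset.sum_congr rfl fun b _ => ?_
  rw [Finset.sum_comm]
  conv_lhs => enter [2, c]; rw [Finset.sum_comm]
  rw [Finset.sum_comm]
  refine Finset.sum_congr rfl fun d _ => ?_
  rw [Finset.sum_comm]
  refine Finset.sum_congr rfl fun a _ => Finset.sum_congr rfl fun cc _ => ?_
  simp only [star_mul']
  ring

theorem stmt6_sum_dot {ι m : Type*} [Fintype m] (s : Finset ι) (f : ι → m → ℂ) (v : m → ℂ) :
    (∑ i ∈ s, f i) ⬝ᵥ v = ∑ i ∈ s, f i ⬝ᵥ v := by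
  simp only [dotProduct, Finset.sum_apply, Finset.sum_mul]
  exact Finset.sum_comm

theorem stmt6_dot_sum {ι m : Type*} [Fintype m] (s : Finset ι) (v : m → ℂ) (f : ι → m → ℂ) :
    v ⬝ᵥ (∑ i ∈ s, f i) = ∑ i ∈ s, v ⬝ᵥ f i := by
  simp only [dotProduct, Finset.sum_apply, Finset.mul_sum]
  exact Finset.sum_comm

theorem stmt6_mulVec_sum {ι m l : Type*} [Fintype m] (s : Finset ι) (M : Matrix l m ℂ)
    (f : ι → m → ℂ) : M *ᵥ (∑ i ∈ s, f i) = ∑ i ∈ s, M *ᵥ f i := by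
  funext a
  simp only [mulVec, Finset.sum_apply]
  exact stmt6_dot_sum s (M a) f

theorem stmt6_expand {n NA NB : ℕ} (c : Fin n → ℝ) (eA : Fin n → Fin NA → ℂ)
    (eB : Fin n → Fin NB → ℂ)
    (δA : Matrix (Fin NA) (Fin NA) ℂ) (δB : Matrix (Fin NB) (Fin NB) ℂ) :
    star (fun x : Fin NA × Fin NB => ∑ i, (c i : ℂ) * eA i x.1 * eB i x.2) ⬝ᵥ
      ((δA ⊗ₖ δB) *ᵥ fun x : Fin NA × Fin NB => ∑ i, (c i : ℂ) * eA i x.1 * eB i x.2)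
    = ∑ i, ∑ j, (c i : ℂ) * (c j : ℂ) * (star (eA i) ⬝ᵥ (δA *ᵥ eA j)) *
        (star (eB i) ⬝ᵥ (δB *ᵥ eB j)) := by
  have hψ : (fun x : Fin NA × Fin NB => ∑ i, (c i : ℂ) * eA i x.1 * eB i x.2)
      = ∑ i, (c i : ℂ) • (fun x : Fin NA × Fin NB => eA i x.1 * eB i x.2) := by
    funext x
    simp [Finset.sum_apply, mul_assoc]
  rw [hψ, star_sum, stmt6_mulVec_sum, stmt6_sum_dot, Finset.sum_congr rfl]
  intro i _
  rw [stmt6_dot_sum, Finset.sum_congr rfl]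
  intro j _
  rw [star_smul, Matrix.mulVec_smul, smul_dotProduct, dotProduct_smul, stmt6_factor]
  simp [Complex.conj_ofReal]
  ring

theorem stmt6_inner_equiv_symm {m : Type*} [Fintype m] (x y : m → ℂ) :
    @inner ℂ _ _ ((WithLp.equiv 2 (m → ℂ)).symm x) ((WithLp.equiv 2 (m → ℂ)).symm y)
      = star x ⬝ᵥ y := by
  rw [dotProduct_comm]; rfl

theorem stmt6_gram {n N : ℕ} (δ : Matrix (Fin N) (Fin N) ℂ) (hδ : δ.PosSemidef)
    (htr : δ.trace = 1) (e : Fin n → Fin N → ℂ)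
    (he : ∀ i j, star (e i) ⬝ᵥ e j = if i = j then 1 else 0) :
    ∃ t : Fin n → ℝ, (∀ i, 0 ≤ t i) ∧ (∑ i, t i ^ 2) ≤ 1 ∧
      ∀ i j, ‖star (e i) ⬝ᵥ (δ *ᵥ e j)‖ ≤ t i * t j := by
  obtain ⟨B, rfl⟩ : ∃ B : Matrix (Fin N) (Fin N) ℂ, δ = Bᴴ * B := by
    open scoped MatrixOrder in exact CStarAlgebra.nonneg_iff_eq_star_mul_self.mp hδ.nonneg
  set f : Fin n → EuclideanSpace ℂ (Fin N) :=
    fun i => (WithLp.equiv 2 _).symm (B *ᵥ e i) with hf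
  refine ⟨fun i => ‖f i‖, fun i => norm_nonneg _, ?_, ?_⟩
  · -- Bessel
    set ee : Fin n → EuclideanSpace ℂ (Fin N) :=
      fun i => (WithLp.equiv 2 _).symm (e i) with hee
    have hON : Orthonormal ℂ ee := by
      rw [orthonormal_iff_ite]
      intro i j
      rw [stmt6_inner_equiv_symm]
      exact he i j
    have htr' : ∑ k, ∑ a, ‖B a k‖ ^ 2 = 1 := by
      have h := congrArg Complex.re htr
      simp only [Matrix.trace, Matrix.diag, Matrix.mul_apply, Matrix.conjTranspose_apply,
        Complex.re_sum, Complex.one_re] at h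
      rw [← h]
      refine Finset.sum_congr rfl fun k _ => Finset.sum_congr rfl fun a _ => ?_
      simp [Complex.star_def, mul_comm, Complex.mul_conj, Complex.normSq_eq_norm_sq,
        ← Complex.ofReal_pow]
    calc ∑ i, ‖f i‖ ^ 2 = ∑ i, ∑ a, ‖(B *ᵥ e i) a‖ ^ 2 := by
          refine Finset.sum_congr rfl fun i _ => ?_
          rw [EuclideanSpace.norm_eq, Real.sq_sqrt (by positivity)]
          rfl
      _ = ∑ a, ∑ i, ‖(B *ᵥ e i) a‖ ^ 2 := Finset.sum_comm
      _ ≤ ∑ a, ∑ k, ‖B a k‖ ^ 2 := by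
          refine Finset.sum_le_sum fun a _ => ?_
          have hx : ∀ i, ‖(B *ᵥ e i) a‖
              = ‖@inner ℂ _ _ (ee i) ((WithLp.equiv 2 _).symm (star (B a)))‖ := by
            intro i
            rw [stmt6_inner_equiv_symm]
            have : star (e i) ⬝ᵥ star (B a) = starRingEnd ℂ ((B *ᵥ e i) a) := by
              simp [Matrix.mulVec, dotProduct, map_sum, mul_comm]
            rw [this, RCLike.norm_conj]
          have hb := hON.sum_inner_products_le
            ((WithLp.equiv 2 (Fin N → ℂ)).symm (star (B a))) (s := Finset.univ)
          have hnx : ‖(WithLp.equiv 2 (Fin N → ℂ)).symm (star (B a))‖ ^ 2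
              = ∑ k, ‖B a k‖ ^ 2 := by
            rw [EuclideanSpace.norm_eq, Real.sq_sqrt (by positivity)]
            simp
          calc ∑ i, ‖(B *ᵥ e i) a‖ ^ 2
              = ∑ i, ‖@inner ℂ _ _ (ee i) ((WithLp.equiv 2 _).symm (star (B a)))‖ ^ 2 :=
                Finset.sum_congr rfl fun i _ => by rw [hx i]
            _ ≤ _ := hb
            _ = ∑ k, ‖B a k‖ ^ 2 := hnx
      _ = 1 := by rw [← htr']; exact Finset.sum_comm
  · intro i j
    have key : star (e i) ⬝ᵥ ((Bᴴ * B) *ᵥ e j) = @inner ℂ _ _ (f i) (f j) := by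
      rw [← Matrix.mulVec_mulVec, Matrix.dotProduct_mulVec, ← Matrix.star_mulVec,
        stmt6_inner_equiv_symm]
    rw [key]
    exact norm_inner_le_norm _ _

theorem stmt6_pure {n N : ℕ} (e : Fin n → Fin N → ℂ)
    (he : ∀ i j, star (e i) ⬝ᵥ e j = if i = j then 1 else 0) (i₀ : Fin n) :
    (Matrix.vecMulVec (e i₀) (star (e i₀))).PosSemidef ∧
    (Matrix.vecMulVec (e i₀) (star (e i₀))).trace = 1 ∧
    ∀ i j, star (e i) ⬝ᵥ ((Matrix.vecMulVec (e i₀) (star (e i₀))) *ᵥ e j)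
      = (if i = i₀ then 1 else 0) * (if i₀ = j then 1 else 0) := by
  have hmv : ∀ x : Fin N → ℂ, (Matrix.vecMulVec (e i₀) (star (e i₀))) *ᵥ x
      = (star (e i₀) ⬝ᵥ x) • e i₀ := by
    intro x
    funext a
    simp [Matrix.vecMulVec_apply, Matrix.mulVec, dotProduct, Finset.mul_sum,
      mul_assoc, mul_comm, mul_left_comm]
  refine ⟨Matrix.PosSemidef.of_dotProduct_mulVec_nonneg ?_ ?_, ?_, ?_⟩
  · ext a b
    simp [Matrix.conjTranspose_apply, Matrix.vecMulVec_apply, mul_comm]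
  · intro x
    rw [hmv, dotProduct_smul]
    have h1 : star x ⬝ᵥ e i₀ = starRingEnd ℂ (star (e i₀) ⬝ᵥ x) := by
      simp [dotProduct, map_sum, mul_comm]
    rw [smul_eq_mul, h1, Complex.mul_conj]
    exact Complex.zero_le_real.2 (Complex.normSq_nonneg _)
  · have h := he i₀ i₀
    rw [if_pos rfl] at h
    rw [← h]
    simp [Matrix.trace, Matrix.diag, Matrix.vecMulVec_apply, dotProduct, mul_comm]
  · intro i j
    rw [hmv, dotProduct_smul, smul_eq_mul, he, he, mul_comm]

end Aux

/-- For a pure state in Schmidt form with largest Schmidt coefficient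
`√p₁`, the Bures-distance correlation measure
`inf √(2 − 2 ⟨ψ|δ_A⊗δ_B|ψ⟩^{1/2})` over density operators equals `√(2(1 − √p₁))`. -/
theorem stmt_6 (n NA NB : ℕ) (hn : 0 < n)
    (p : Fin n → ℝ) (hnn : ∀ i, 0 ≤ p i) (hanti : Antitone p) (hsum : ∑ i, p i = 1)
    (eA : Fin n → (Fin NA → ℂ)) (eB : Fin n → (Fin NB → ℂ))
    (hA : ∀ i j, star (eA i) ⬝ᵥ eA j = if i = j then 1 else 0)
    (hB : ∀ i j, star (eB i) ⬝ᵥ eB j = if i = j then 1 else 0)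
    (ψ : Fin NA × Fin NB → ℂ)
    (hψ : ψ = fun x => ∑ i, (Real.sqrt (p i) : ℂ) * eA i x.1 * eB i x.2) :
    sInf {x : ℝ | ∃ (δA : Matrix (Fin NA) (Fin NA) ℂ) (δB : Matrix (Fin NB) (Fin NB) ℂ),
        δA.PosSemidef ∧ δB.PosSemidef ∧ δA.trace = 1 ∧ δB.trace = 1 ∧
        x = Real.sqrt (2 - 2 * Real.sqrt ((star ψ ⬝ᵥ ((δA ⊗ₖ δB) *ᵥ ψ)).re))}
      = Real.sqrt (2 * (1 - Real.sqrt (p ⟨0, hn⟩))) := by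
  have i₀ : Fin n := ⟨0, hn⟩
  have hp0 : 0 ≤ p ⟨0, hn⟩ := hnn _
  -- upper bound on the overlap for any admissible pair
  have hval : ∀ (δA : Matrix (Fin NA) (Fin NA) ℂ) (δB : Matrix (Fin NB) (Fin NB) ℂ),
      δA.PosSemidef → δB.PosSemidef → δA.trace = 1 → δB.trace = 1 →
      (star ψ ⬝ᵥ ((δA ⊗ₖ δB) *ᵥ ψ)).re ≤ p ⟨0, hn⟩ := by
    intro δA δB hPA hPB htA htB
    obtain ⟨tA, htA0, htA1, htAb⟩ := stmt6_gram δA hPA htA eA hA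
    obtain ⟨tB, htB0, htB1, htBb⟩ := stmt6_gram δB hPB htB eB hB
    have hE := stmt6_expand (fun i => Real.sqrt (p i)) eA eB δA δB
    rw [hψ, hE]
    set c : Fin n → ℝ := fun i => Real.sqrt (p i) with hc
    refine le_trans (Complex.re_le_norm _) ?_
    have step1 : ‖∑ i, ∑ j, (c i : ℂ) * (c j : ℂ)
          * (star (eA i) ⬝ᵥ (δA *ᵥ eA j)) * (star (eB i) ⬝ᵥ (δB *ᵥ eB j))‖
        ≤ ∑ i, ∑ j, c i * c j * (tA i * tA j) * (tB i * tB j) := by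
      refine le_trans (norm_sum_le _ _) ?_
      refine le_trans (Finset.sum_le_sum fun i _ => norm_sum_le _ _) ?_
      refine Finset.sum_le_sum fun i _ => Finset.sum_le_sum fun j _ => ?_
      rw [norm_mul, norm_mul, norm_mul, Complex.norm_real, Complex.norm_real,
        Real.norm_of_nonneg (Real.sqrt_nonneg _), Real.norm_of_nonneg (Real.sqrt_nonneg _)]
      have h1 := htAb i j
      have h2 := htBb i j
      have hn1 : (0:ℝ) ≤ c i * c j := mul_nonneg (Real.sqrt_nonneg _) (Real.sqrt_nonneg _)
      calc c i * c j * ‖star (eA i) ⬝ᵥ (δA *ᵥ eA j)‖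
              * ‖star (eB i) ⬝ᵥ (δB *ᵥ eB j)‖
          ≤ c i * c j * (tA i * tA j) * ‖star (eB i) ⬝ᵥ (δB *ᵥ eB j)‖ := by
            apply mul_le_mul_of_nonneg_right _ (norm_nonneg _)
            exact mul_le_mul_of_nonneg_left h1 hn1
        _ ≤ c i * c j * (tA i * tA j) * (tB i * tB j) :=
            mul_le_mul_of_nonneg_left h2
              (mul_nonneg hn1 (mul_nonneg (htA0 i) (htA0 j)))
    refine le_trans step1 ?_
    have step2 : ∑ i, ∑ j, c i * c j * (tA i * tA j) * (tB i * tB j)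
        = (∑ i, c i * (tA i * tB i)) ^ 2 := by
      rw [sq, Finset.sum_mul_sum]
      exact Finset.sum_congr rfl fun i _ => Finset.sum_congr rfl fun j _ => by ring
    rw [step2]
    have hc0 : ∀ i, 0 ≤ c i * (tA i * tB i) :=
      fun i => mul_nonneg (Real.sqrt_nonneg _) (mul_nonneg (htA0 i) (htB0 i))
    have hle : ∑ i, c i * (tA i * tB i)
        ≤ Real.sqrt (p ⟨0, hn⟩) * ∑ i, tA i * tB i := by
      rw [Finset.mul_sum]
      refine Finset.sum_le_sum fun i _ => ?_
      exact mul_le_mul_of_nonneg_right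
        (Real.sqrt_le_sqrt (hanti (Fin.le_def.mpr (Nat.zero_le _))))
        (mul_nonneg (htA0 i) (htB0 i))
    have hSnn : 0 ≤ ∑ i, c i * (tA i * tB i) := Finset.sum_nonneg fun i _ => hc0 i
    have h2 := pow_le_pow_left₀ hSnn hle 2
    refine le_trans h2 ?_
    rw [mul_pow, Real.sq_sqrt hp0]
    have h4 : (∑ i, tA i * tB i) ^ 2 ≤ 1 := by
      refine le_trans (Finset.sum_mul_sq_le_sq_mul_sq Finset.univ tA tB) ?_
      exact mul_le_one₀ htA1 (Finset.sum_nonneg fun i _ => sq_nonneg _) htB1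
    calc p ⟨0, hn⟩ * (∑ i, tA i * tB i) ^ 2 ≤ p ⟨0, hn⟩ * 1 :=
          mul_le_mul_of_nonneg_left h4 hp0
      _ = p ⟨0, hn⟩ := mul_one _
  -- membership
  have hmem : Real.sqrt (2 * (1 - Real.sqrt (p ⟨0, hn⟩))) ∈
      {x : ℝ | ∃ (δA : Matrix (Fin NA) (Fin NA) ℂ) (δB : Matrix (Fin NB) (Fin NB) ℂ),
        δA.PosSemidef ∧ δB.PosSemidef ∧ δA.trace = 1 ∧ δB.trace = 1 ∧
        x = Real.sqrt (2 - 2 * Real.sqrt ((star ψ ⬝ᵥ ((δA ⊗ₖ δB) *ᵥ ψ)).re))} := by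
    obtain ⟨hPA, htrA, hvA⟩ := stmt6_pure eA hA ⟨0, hn⟩
    obtain ⟨hPB, htrB, hvB⟩ := stmt6_pure eB hB ⟨0, hn⟩
    refine ⟨_, _, hPA, hPB, htrA, htrB, ?_⟩
    have hE := stmt6_expand (fun i => Real.sqrt (p i)) eA eB
      (Matrix.vecMulVec (eA ⟨0, hn⟩) (star (eA ⟨0, hn⟩)))
      (Matrix.vecMulVec (eB ⟨0, hn⟩) (star (eB ⟨0, hn⟩)))
    rw [hψ, hE]
    have hterm : ∀ i j : Fin n, ((Real.sqrt (p i) : ℂ)) * (Real.sqrt (p j) : ℂ)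
        * (star (eA i) ⬝ᵥ ((Matrix.vecMulVec (eA ⟨0, hn⟩) (star (eA ⟨0, hn⟩))) *ᵥ eA j))
        * (star (eB i) ⬝ᵥ ((Matrix.vecMulVec (eB ⟨0, hn⟩) (star (eB ⟨0, hn⟩))) *ᵥ eB j))
        = if i = ⟨0, hn⟩ ∧ j = ⟨0, hn⟩ then ((p ⟨0, hn⟩ : ℝ) : ℂ) else 0 := by
      intro i j
      rw [hvA i j, hvB i j]
      by_cases hi : i = ⟨0, hn⟩ <;> by_cases hj : j = ⟨0, hn⟩ <;>
        simp [hi, hj, eq_comm]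
      rw [← Complex.ofReal_mul, Real.mul_self_sqrt hp0]
    simp_rw [hterm]
    rw [show (∑ i, ∑ j, if i = (⟨0, hn⟩ : Fin n) ∧ j = (⟨0, hn⟩ : Fin n)
        then ((p ⟨0, hn⟩ : ℝ) : ℂ) else 0) = ((p ⟨0, hn⟩ : ℝ) : ℂ) by
      simp [ite_and, Finset.sum_ite_eq]]
    rw [Complex.ofReal_re]
    congr 1
    ring
  -- lower bound
  have hlb : ∀ x ∈ {x : ℝ | ∃ (δA : Matrix (Fin NA) (Fin NA) ℂ)
        (δB : Matrix (Fin NB) (Fin NB) ℂ),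
        δA.PosSemidef ∧ δB.PosSemidef ∧ δA.trace = 1 ∧ δB.trace = 1 ∧
        x = Real.sqrt (2 - 2 * Real.sqrt ((star ψ ⬝ᵥ ((δA ⊗ₖ δB) *ᵥ ψ)).re))},
      Real.sqrt (2 * (1 - Real.sqrt (p ⟨0, hn⟩))) ≤ x := by
    rintro x ⟨δA, δB, hPA, hPB, htA, htB, rfl⟩
    apply Real.sqrt_le_sqrt
    have h1 := Real.sqrt_le_sqrt (hval δA δB hPA hPB htA htB)
    linarith
  exact le_antisymm (csInf_le ⟨_, hlb⟩ hmem) (le_csInf ⟨_, hmem⟩ hlb)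
end

section
/- For a pure state |ψ⟩ = ∑_i √p_i |i⟩_A ⊗ |i⟩_B with Schmidt coefficients in decreasing order, the Hellinger-distance-based correlation measure C^(D_H)(|ψ⟩⟨ψ|) = inf over density operators δ_A, δ_B of √(2 - 2⟨ψ|√δ_A ⊗ √δ_B|ψ⟩) equals √(2(1 - p₁)). -/
open Matrix Kronecker ComplexOrder

/-!
With `S = √δ_A` and `T = √δ_B`, the overlap `⟨ψ|S ⊗ T|ψ⟩` expands in the Schmidt bases as
`∑ᵢⱼ √(pᵢ pⱼ) ⟨i|S|j⟩ ⟨i|T|j⟩`. Bessel's inequality, applied twice, bounds `∑ᵢⱼ |⟨i|S|j⟩|²`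
by the squared Hilbert–Schmidt norm `tr S² = tr δ_A = 1`, and likewise for `T`; then
`√(pᵢ pⱼ) ≤ p₁` and AM–GM bound the real part of the overlap by `p₁`. The rank-one projectors
onto the first Schmidt vectors are their own square roots and attain this bound.
-/

section HilbertSchmidt

variable {𝕜 ι m : Type*} [RCLike 𝕜] [Fintype ι] [DecidableEq ι] [Fintype m]

theorem sum_norm_sq_star_dotProduct_le (e : ι → m → 𝕜)
    (he : ∀ i j, star (e i) ⬝ᵥ e j = if i = j then 1 else 0) (v : m → 𝕜) :
    ∑ i, ‖star (e i) ⬝ᵥ v‖ ^ 2 ≤ ∑ a, ‖v a‖ ^ 2 := by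
  have horth : Orthonormal 𝕜 (fun i => WithLp.toLp 2 (e i)) := by
    rw [orthonormal_iff_ite]
    intro i j
    simpa [PiLp.inner_apply, RCLike.inner_apply, dotProduct, mul_comm] using he i j
  have hbessel := horth.sum_inner_products_le (s := Finset.univ) (WithLp.toLp 2 v)
  rw [EuclideanSpace.norm_sq_eq] at hbessel
  simpa [PiLp.inner_apply, RCLike.inner_apply, dotProduct, mul_comm] using hbessel

theorem sum_norm_sq_star_dotProduct_mulVec_le (e : ι → m → 𝕜)
    (he : ∀ i j, star (e i) ⬝ᵥ e j = if i = j then 1 else 0) (S : Matrix m m 𝕜) :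
    ∑ i, ∑ j, ‖star (e i) ⬝ᵥ (S *ᵥ e j)‖ ^ 2 ≤ ∑ a, ∑ b, ‖S a b‖ ^ 2 := by
  have hrow : ∀ j a, ‖(S *ᵥ e j) a‖ = ‖star (e j) ⬝ᵥ star (S a)‖ := fun j a => by
    rw [← norm_star]
    simp [mulVec, dotProduct, star_sum, mul_comm]
  calc ∑ i, ∑ j, ‖star (e i) ⬝ᵥ (S *ᵥ e j)‖ ^ 2
      = ∑ j, ∑ i, ‖star (e i) ⬝ᵥ (S *ᵥ e j)‖ ^ 2 := Finset.sum_comm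
    _ ≤ ∑ j, ∑ a, ‖(S *ᵥ e j) a‖ ^ 2 :=
      Finset.sum_le_sum fun j _ => sum_norm_sq_star_dotProduct_le e he _
    _ = ∑ a, ∑ j, ‖star (e j) ⬝ᵥ star (S a)‖ ^ 2 := by simp_rw [hrow]; exact Finset.sum_comm
    _ ≤ ∑ a, ∑ b, ‖S a b‖ ^ 2 := Finset.sum_le_sum fun a _ => by
      simpa using sum_norm_sq_star_dotProduct_le e he (star (S a))

end HilbertSchmidt

theorem sum_norm_sq_apply_eq_re_trace {𝕜 m : Type*} [RCLike 𝕜] [Fintype m] (S : Matrix m m 𝕜) :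
    ∑ a, ∑ b, ‖S a b‖ ^ 2 = RCLike.re (Sᴴ * S).trace := by
  simp only [trace, diag, mul_apply, conjTranspose_apply, RCLike.star_def, RCLike.conj_mul,
    map_sum, ← RCLike.ofReal_pow, RCLike.ofReal_re]
  exact Finset.sum_comm

theorem re_sum_sum_mul_le {𝕜 ι : Type*} [RCLike 𝕜] [Fintype ι] (c : ι → ℝ) {M : ℝ}
    (hc : ∀ i, 0 ≤ c i) (hcM : ∀ i, c i ≤ M) (a b : ι → ι → 𝕜)
    (ha : ∑ i, ∑ j, ‖a i j‖ ^ 2 ≤ 1) (hb : ∑ i, ∑ j, ‖b i j‖ ^ 2 ≤ 1) :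
    RCLike.re (∑ i, ∑ j, (c i : 𝕜) * c j * a i j * b i j) ≤ M ^ 2 := by
  have hterm : ∀ i j, RCLike.re ((c i : 𝕜) * c j * a i j * b i j) ≤
      M ^ 2 * ((‖a i j‖ ^ 2 + ‖b i j‖ ^ 2) / 2) := fun i j => by
    have hcc : c i * c j ≤ M ^ 2 :=
      sq M ▸ mul_le_mul (hcM i) (hcM j) (hc j) ((hc i).trans (hcM i))
    have hab : ‖a i j‖ * ‖b i j‖ ≤ (‖a i j‖ ^ 2 + ‖b i j‖ ^ 2) / 2 := by
      nlinarith [sq_nonneg (‖a i j‖ - ‖b i j‖)]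
    calc RCLike.re ((c i : 𝕜) * c j * a i j * b i j)
        ≤ ‖(c i : 𝕜) * c j * a i j * b i j‖ := RCLike.re_le_norm _
      _ = c i * c j * (‖a i j‖ * ‖b i j‖) := by
        simp only [norm_mul, RCLike.norm_ofReal, abs_of_nonneg (hc i), abs_of_nonneg (hc j)]
        ring
      _ ≤ M ^ 2 * ((‖a i j‖ ^ 2 + ‖b i j‖ ^ 2) / 2) :=
        mul_le_mul hcc hab (by positivity) (sq_nonneg M)
  calc RCLike.re (∑ i, ∑ j, (c i : 𝕜) * c j * a i j * b i j)
      ≤ ∑ i, ∑ j, M ^ 2 * ((‖a i j‖ ^ 2 + ‖b i j‖ ^ 2) / 2) := by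
        simp only [map_sum]
        exact Finset.sum_le_sum fun i _ => Finset.sum_le_sum fun j _ => hterm i j
    _ = M ^ 2 * ((∑ i, ∑ j, ‖a i j‖ ^ 2 + ∑ i, ∑ j, ‖b i j‖ ^ 2) / 2) := by
        simp only [← Finset.mul_sum, ← Finset.sum_div, ← Finset.sum_add_distrib]
    _ ≤ M ^ 2 := by nlinarith [sq_nonneg M]

section RankOne

variable {R m : Type*} [CommSemiring R] [Fintype m]

theorem dotProduct_vecMulVec_mulVec (x u v w : m → R) :
    x ⬝ᵥ (vecMulVec u v *ᵥ w) = (x ⬝ᵥ u) * (v ⬝ᵥ w) := by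
  rw [vecMulVec_mulVec, dotProduct_smul, MulOpposite.smul_eq_mul_unop, MulOpposite.unop_op]

theorem isIdempotentElem_vecMulVec_star [Star R] {u : m → R} (hu : star u ⬝ᵥ u = 1) :
    IsIdempotentElem (vecMulVec u (star u)) := by
  rw [IsIdempotentElem, vecMulVec_mul_vecMulVec, hu, one_smul]

end RankOne

section Kronecker

variable {𝕜 m n : Type*} [RCLike 𝕜] [Fintype m] [Fintype n]

theorem kronecker_mulVec_mul_apply (S : Matrix m m 𝕜) (T : Matrix n n 𝕜) (u : m → 𝕜)
    (v : n → 𝕜) :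
    (S ⊗ₖ T) *ᵥ (fun x => u x.1 * v x.2) = fun x => (S *ᵥ u) x.1 * (T *ᵥ v) x.2 := by
  funext x
  simp only [mulVec, dotProduct, kroneckerMap_apply, Fintype.sum_prod_type, Finset.sum_mul_sum]
  exact Finset.sum_congr rfl fun a _ => Finset.sum_congr rfl fun b _ => by ring

theorem star_mul_apply_dotProduct (u u' : m → 𝕜) (v v' : n → 𝕜) :
    star (fun x : m × n => u x.1 * v x.2) ⬝ᵥ (fun x => u' x.1 * v' x.2) =
      (star u ⬝ᵥ u') * (star v ⬝ᵥ v') := by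
  simp only [dotProduct, Fintype.sum_prod_type, Pi.star_apply, star_mul', Finset.sum_mul_sum]
  exact Finset.sum_congr rfl fun a _ => Finset.sum_congr rfl fun b _ => by ring

variable {ι : Type*} [Fintype ι]

def schmidtVector (c : ι → 𝕜) (eA : ι → m → 𝕜) (eB : ι → n → 𝕜) : m × n → 𝕜 :=
  fun x => ∑ i, c i * eA i x.1 * eB i x.2

theorem star_schmidtVector_dotProduct_kronecker_mulVec (c : ι → 𝕜) (eA : ι → m → 𝕜)
    (eB : ι → n → 𝕜) (S : Matrix m m 𝕜) (T : Matrix n n 𝕜) :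
    star (schmidtVector c eA eB) ⬝ᵥ ((S ⊗ₖ T) *ᵥ schmidtVector c eA eB) =
      ∑ i, ∑ j, star (c i) * c j * (star (eA i) ⬝ᵥ (S *ᵥ eA j)) *
        (star (eB i) ⬝ᵥ (T *ᵥ eB j)) := by
  have hψ : schmidtVector c eA eB = ∑ i, c i • fun x : m × n => eA i x.1 * eB i x.2 := by
    funext x
    simp [schmidtVector, mul_assoc]
  simp only [hψ, mulVec_sum, mulVec_smul, kronecker_mulVec_mul_apply, star_sum, star_smul,
    sum_dotProduct, dotProduct_sum, smul_dotProduct, dotProduct_smul, star_mul_apply_dotProduct,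
    smul_eq_mul, Finset.mul_sum]
  rw [Finset.sum_comm]
  exact Finset.sum_congr rfl fun i _ => Finset.sum_congr rfl fun j _ => by ring

variable [DecidableEq ι]

theorem re_star_schmidtVector_dotProduct_kronecker_mulVec_le (c : ι → ℝ) {M : ℝ}
    (hc : ∀ i, 0 ≤ c i) (hcM : ∀ i, c i ≤ M)
    (eA : ι → m → 𝕜) (heA : ∀ i j, star (eA i) ⬝ᵥ eA j = if i = j then 1 else 0)
    (eB : ι → n → 𝕜) (heB : ∀ i j, star (eB i) ⬝ᵥ eB j = if i = j then 1 else 0)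
    (S : Matrix m m 𝕜) (T : Matrix n n 𝕜)
    (hS : ∑ a, ∑ b, ‖S a b‖ ^ 2 ≤ 1) (hT : ∑ a, ∑ b, ‖T a b‖ ^ 2 ≤ 1) :
    RCLike.re (star (schmidtVector (fun i => (c i : 𝕜)) eA eB) ⬝ᵥ
      ((S ⊗ₖ T) *ᵥ schmidtVector (fun i => (c i : 𝕜)) eA eB)) ≤ M ^ 2 := by
  rw [star_schmidtVector_dotProduct_kronecker_mulVec]
  simp only [RCLike.star_def, RCLike.conj_ofReal]
  exact re_sum_sum_mul_le c hc hcM _ _ ((sum_norm_sq_star_dotProduct_mulVec_le eA heA S).trans hS)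
    ((sum_norm_sq_star_dotProduct_mulVec_le eB heB T).trans hT)

theorem star_schmidtVector_dotProduct_kronecker_vecMulVec_mulVec (c : ι → 𝕜)
    (eA : ι → m → 𝕜) (heA : ∀ i j, star (eA i) ⬝ᵥ eA j = if i = j then 1 else 0)
    (eB : ι → n → 𝕜) (heB : ∀ i j, star (eB i) ⬝ᵥ eB j = if i = j then 1 else 0) (k : ι) :
    star (schmidtVector c eA eB) ⬝ᵥ
      ((vecMulVec (eA k) (star (eA k)) ⊗ₖ vecMulVec (eB k) (star (eB k))) *ᵥ
        schmidtVector c eA eB) = star (c k) * c k := by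
  simp [star_schmidtVector_dotProduct_kronecker_mulVec, dotProduct_vecMulVec_mulVec, heA, heB]

end Kronecker

section SquareRoot

variable {m : Type*} [Fintype m] [DecidableEq m]

theorem conj_diagonal_sqrt_eigenvalues_eq_cfc_sqrt {A : Matrix m m ℂ} (hA : A.IsHermitian) :
    (hA.eigenvectorUnitary : Matrix m m ℂ) *
      diagonal (fun i => ((Real.sqrt (hA.eigenvalues i) : ℝ) : ℂ)) *
      (star hA.eigenvectorUnitary : Matrix m m ℂ) = cfc Real.sqrt A := by
  rw [hA.cfc_eq, IsHermitian.cfc, Unitary.conjStarAlgAut_apply]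
  rfl

theorem cfc_sqrt_mul_self {A : Matrix m m ℂ} (hA : A.PosSemidef) :
    cfc Real.sqrt A * cfc Real.sqrt A = A := by
  rw [← cfc_mul ..]
  conv_rhs => rw [← cfc_id' ℝ A hA.1.isSelfAdjoint]
  refine cfc_congr fun x hx => Real.mul_self_sqrt ?_
  rw [hA.1.spectrum_real_eq_range_eigenvalues] at hx
  obtain ⟨i, rfl⟩ := hx
  exact hA.eigenvalues_nonneg i

theorem sum_norm_sq_cfc_sqrt_apply {A : Matrix m m ℂ} (hA : A.PosSemidef) :
    ∑ a, ∑ b, ‖cfc Real.sqrt A a b‖ ^ 2 = A.trace.re := by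
  have hS : (cfc Real.sqrt A)ᴴ = cfc Real.sqrt A := (cfc_predicate Real.sqrt A).star_eq
  rw [sum_norm_sq_apply_eq_re_trace, hS, cfc_sqrt_mul_self hA]
  rfl

theorem cfc_sqrt_of_isIdempotentElem {P : Matrix m m ℂ} (hP : P.IsHermitian)
    (hP2 : IsIdempotentElem P) : cfc Real.sqrt P = P := by
  conv_rhs => rw [← cfc_id' ℝ P hP.isSelfAdjoint]
  refine cfc_congr fun x hx => ?_
  rcases hP2.spectrum_subset ℝ hx with rfl | rfl <;> simp

theorem cfc_sqrt_vecMulVec_star {u : m → ℂ} (hu : star u ⬝ᵥ u = 1) :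
    cfc Real.sqrt (vecMulVec u (star u)) = vecMulVec u (star u) :=
  cfc_sqrt_of_isIdempotentElem (posSemidef_vecMulVec_self_star u).1
    (isIdempotentElem_vecMulVec_star hu)

end SquareRoot

theorem stmt_7_general (n NA NB : ℕ) (hn : 0 < n)
    (p : Fin n → ℝ) (hnn : ∀ i, 0 ≤ p i) (hanti : Antitone p)
    (eA : Fin n → (Fin NA → ℂ)) (eB : Fin n → (Fin NB → ℂ))
    (hA : ∀ i j, star (eA i) ⬝ᵥ eA j = if i = j then 1 else 0)
    (hB : ∀ i j, star (eB i) ⬝ᵥ eB j = if i = j then 1 else 0)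
    (ψ : Fin NA × Fin NB → ℂ)
    (hψ : ψ = fun x => ∑ i, (Real.sqrt (p i) : ℂ) * eA i x.1 * eB i x.2) :
    sInf {x : ℝ | ∃ (δA : Matrix (Fin NA) (Fin NA) ℂ) (δB : Matrix (Fin NB) (Fin NB) ℂ)
        (h1 : δA.PosSemidef) (h2 : δB.PosSemidef), δA.trace = 1 ∧ δB.trace = 1 ∧
        x = Real.sqrt (2 - 2 * (star ψ ⬝ᵥ ((((h1.1.eigenvectorUnitary : Matrix (Fin NA) (Fin NA) ℂ) *
          diagonal (fun i => ((Real.sqrt (h1.1.eigenvalues i) : ℝ) : ℂ)) *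
          (star h1.1.eigenvectorUnitary : Matrix (Fin NA) (Fin NA) ℂ)) ⊗ₖ
        ((h2.1.eigenvectorUnitary : Matrix (Fin NB) (Fin NB) ℂ) *
          diagonal (fun i => ((Real.sqrt (h2.1.eigenvalues i) : ℝ) : ℂ)) *
          (star h2.1.eigenvectorUnitary : Matrix (Fin NB) (Fin NB) ℂ))) *ᵥ ψ)).re)}
      = Real.sqrt (2 * (1 - p ⟨0, hn⟩)) := by
  obtain rfl : ψ = schmidtVector (fun i => (√(p i) : ℂ)) eA eB := hψ
  simp only [conj_diagonal_sqrt_eigenvalues_eq_cfc_sqrt]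
  set k : Fin n := ⟨0, hn⟩
  have hAk : star (eA k) ⬝ᵥ eA k = 1 := by simpa using hA k k
  have hBk : star (eB k) ⬝ᵥ eB k = 1 := by simpa using hB k k
  refine IsLeast.csInf_eq ⟨⟨vecMulVec (eA k) (star (eA k)), vecMulVec (eB k) (star (eB k)),
    posSemidef_vecMulVec_self_star _, posSemidef_vecMulVec_self_star _,
    by rw [trace_vecMulVec, dotProduct_comm, hAk], by rw [trace_vecMulVec, dotProduct_comm, hBk],
    ?_⟩, ?_⟩
  · rw [cfc_sqrt_vecMulVec_star hAk, cfc_sqrt_vecMulVec_star hBk,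
      star_schmidtVector_dotProduct_kronecker_vecMulVec_mulVec _ eA hA eB hB k, Complex.star_def,
      Complex.conj_ofReal, ← Complex.ofReal_mul, Complex.ofReal_re, Real.mul_self_sqrt (hnn k)]
    ring_nf
  · rintro _ ⟨δA, δB, hδA, hδB, htrA, htrB, rfl⟩
    have hle := re_star_schmidtVector_dotProduct_kronecker_mulVec_le (fun i => √(p i))
      (fun i => Real.sqrt_nonneg _)
      (fun i => Real.sqrt_le_sqrt (hanti (show k ≤ i from Nat.zero_le i)))
      eA hA eB hB _ _ (by rw [sum_norm_sq_cfc_sqrt_apply hδA, htrA, Complex.one_re])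
      (by rw [sum_norm_sq_cfc_sqrt_apply hδB, htrB, Complex.one_re])
    rw [Real.sq_sqrt (hnn k), RCLike.re_to_complex, RCLike.ofReal_eq_complex_ofReal] at hle
    exact Real.sqrt_le_sqrt (by linarith)

/-- For a pure state in Schmidt form, the Hellinger-distance correlation
measure `inf √(2 − 2 ⟨ψ|√δ_A ⊗ √δ_B|ψ⟩)` over density operators equals `√(2(1 − p₁))`. -/
theorem stmt_7 (n NA NB : ℕ) (hn : 0 < n)
    (p : Fin n → ℝ) (hnn : ∀ i, 0 ≤ p i) (hanti : Antitone p) (hsum : ∑ i, p i = 1)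
    (eA : Fin n → (Fin NA → ℂ)) (eB : Fin n → (Fin NB → ℂ))
    (hA : ∀ i j, star (eA i) ⬝ᵥ eA j = if i = j then 1 else 0)
    (hB : ∀ i j, star (eB i) ⬝ᵥ eB j = if i = j then 1 else 0)
    (ψ : Fin NA × Fin NB → ℂ)
    (hψ : ψ = fun x => ∑ i, (Real.sqrt (p i) : ℂ) * eA i x.1 * eB i x.2) :
    sInf {x : ℝ | ∃ (δA : Matrix (Fin NA) (Fin NA) ℂ) (δB : Matrix (Fin NB) (Fin NB) ℂ)
        (h1 : δA.PosSemidef) (h2 : δB.PosSemidef), δA.trace = 1 ∧ δB.trace = 1 ∧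
        x = Real.sqrt (2 - 2 * (star ψ ⬝ᵥ ((((h1.1.eigenvectorUnitary : Matrix (Fin NA) (Fin NA) ℂ) *
          diagonal (fun i => ((Real.sqrt (h1.1.eigenvalues i) : ℝ) : ℂ)) *
          (star h1.1.eigenvectorUnitary : Matrix (Fin NA) (Fin NA) ℂ)) ⊗ₖ
        ((h2.1.eigenvectorUnitary : Matrix (Fin NB) (Fin NB) ℂ) *
          diagonal (fun i => ((Real.sqrt (h2.1.eigenvalues i) : ℝ) : ℂ)) *
          (star h2.1.eigenvectorUnitary : Matrix (Fin NB) (Fin NB) ℂ))) *ᵥ ψ)).re)}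
      = Real.sqrt (2 * (1 - p ⟨0, hn⟩)) :=
  stmt_7_general n NA NB hn p hnn hanti eA eB hA hB ψ hψ
end

section
/- For the strictly correlated classical-classical state ρ_pc = ∑_i p_i |i⟩_A⟨i| ⊗ |i⟩_B⟨i| with p in decreasing order, inf over density operators δ_A, δ_B of [2 - 2 ∑_i √p_i (√δ_A)_{ii} (√δ_B)_{ii}]^{1/2} equals √(2(1 - √p₁)), where (√δ)_{ii} = ⟨i|√δ|i⟩. -/
open Matrix ComplexOrder

/-- The positive semidefinite square root of a positive semidefinite matrix
(the definition `Matrix.PosSemidef.sqrt` of the older Mathlib, since removed). -/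
noncomputable def Matrix.PosSemidef.sqrt {n : Type*} [Fintype n] [DecidableEq n]
    {𝕜 : Type*} [RCLike 𝕜] {A : Matrix n n 𝕜} (hA : A.PosSemidef) : Matrix n n 𝕜 :=
  hA.1.eigenvectorUnitary.1 * diagonal ((↑) ∘ (√·) ∘ hA.1.eigenvalues) *
  (star hA.1.eigenvectorUnitary : Matrix n n 𝕜)

open scoped MatrixOrder in
lemma Matrix.PosSemidef.sqrt_eq_cfcSqrt {n : ℕ} {A : Matrix (Fin n) (Fin n) ℂ}
    (hA : A.PosSemidef) : hA.sqrt = CFC.sqrt A := by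
  rw [CFC.sqrt_eq_cfc, cfc_nnreal_eq_real _ A hA.nonneg, hA.1.cfc_eq]
  unfold Matrix.PosSemidef.sqrt IsHermitian.cfc
  rw [Unitary.conjStarAlgAut_apply]
  congr 2
  funext i
  simp [Real.coe_sqrt, Real.coe_toNNReal', Function.comp_def, max_eq_left, hA.eigenvalues_nonneg]

open scoped MatrixOrder in
lemma Matrix.PosSemidef.posSemidef_sqrt {n : ℕ} {A : Matrix (Fin n) (Fin n) ℂ}
    (hA : A.PosSemidef) : hA.sqrt.PosSemidef := by
  rw [hA.sqrt_eq_cfcSqrt]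
  exact (CFC.sqrt_nonneg A).posSemidef

open scoped MatrixOrder in
lemma Matrix.PosSemidef.sqrt_mul_self {n : ℕ} {A : Matrix (Fin n) (Fin n) ℂ}
    (hA : A.PosSemidef) : hA.sqrt * hA.sqrt = A := by
  rw [hA.sqrt_eq_cfcSqrt]
  exact CFC.sqrt_mul_sqrt_self A hA.nonneg

open scoped MatrixOrder in
lemma Matrix.PosSemidef.eq_sqrt_of_sq_eq {n : ℕ} {A : Matrix (Fin n) (Fin n) ℂ}
    (hA : A.PosSemidef) {B : Matrix (Fin n) (Fin n) ℂ} (hB : B.PosSemidef) (hAB : B ^ 2 = A) :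
    B = hA.sqrt := by
  rw [hA.sqrt_eq_cfcSqrt]
  exact (CFC.sqrt_unique (by rw [← sq]; exact hAB) hB.nonneg).symm

/-- Diagonal entries of a PSD complex matrix are nonneg reals. -/
lemma diag_psd {n : ℕ} {M : Matrix (Fin n) (Fin n) ℂ} (hM : M.PosSemidef) (i : Fin n) :
    0 ≤ (M i i).re ∧ (M i i).im = 0 := by
  have h := hM.dotProduct_mulVec_nonneg (Pi.single i 1)
  simp only [star_trivial, dotProduct, mulVec, Pi.single_apply] at h
  have h2 : (0 : ℂ) ≤ M i i := by
    convert h using 1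
    simp [dotProduct, Pi.single_apply, Finset.sum_ite_eq, Finset.mul_sum]
  rw [Complex.le_def] at h2
  exact ⟨h2.1, h2.2.symm⟩

/-- For a PSD matrix `δ` with trace 1, the squared real diagonal entries of its sqrt sum to ≤ 1. -/
lemma sqrt_diag_sq_sum_le {n : ℕ} {δ : Matrix (Fin n) (Fin n) ℂ} (h : δ.PosSemidef)
    (htr : δ.trace = 1) : ∑ i, (h.sqrt i i).re ^ 2 ≤ 1 := by
  set S := h.sqrt with hSdef
  have hS : S.PosSemidef := h.posSemidef_sqrt
  have hmul : S * S = δ := h.sqrt_mul_self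
  have hherm : Sᴴ = S := hS.1
  have hle : ∀ i, (S i i).re ^ 2 ≤ (δ i i).re := by
    intro i
    have h1 : δ i i = ∑ j, S i j * S j i := by rw [← hmul, mul_apply]
    have h2 : ∀ j, S j i = starRingEnd ℂ (S i j) := by
      intro j
      conv_rhs => rw [← hherm]
      simp [conjTranspose_apply]
    have h3 : (δ i i).re = ∑ j, Complex.normSq (S i j) := by
      rw [h1]
      rw [Complex.re_sum]
      congr 1; ext j
      rw [h2 j, Complex.mul_conj]
      simp
    rw [h3]
    have h4 : (S i i).re ^ 2 ≤ Complex.normSq (S i i) := by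
      rw [Complex.normSq_apply]; nlinarith [sq_nonneg (S i i).im]
    refine h4.trans ?_
    exact Finset.single_le_sum (f := fun j => Complex.normSq (S i j))
      (fun j _ => Complex.normSq_nonneg _) (Finset.mem_univ i)
  calc ∑ i, (S i i).re ^ 2 ≤ ∑ i, (δ i i).re := Finset.sum_le_sum fun i _ => hle i
    _ = 1 := by
        have : (δ.trace).re = 1 := by rw [htr]; simp
        rw [← this, Matrix.trace, Complex.re_sum]
        rfl

/-- For the strictly correlated classical-classical state
`ρ_pc = ∑ᵢ pᵢ |i⟩_A⟨i| ⊗ |i⟩_B⟨i|` with `p` decreasingly ordered, the infimum over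
density operators `δ_A, δ_B` of `[2 − 2 ∑ᵢ √pᵢ (√δ_A)_{ii} (√δ_B)_{ii}]^{1/2}`
equals `√(2(1 − √p₁))`. -/
theorem stmt_12 (n : ℕ) (hn : 0 < n)
    (p : Fin n → ℝ) (hnn : ∀ i, 0 ≤ p i) (hanti : Antitone p) (hsum : ∑ i, p i = 1) :
    sInf {x : ℝ | ∃ (δA δB : Matrix (Fin n) (Fin n) ℂ)
        (h1 : δA.PosSemidef) (h2 : δB.PosSemidef), δA.trace = 1 ∧ δB.trace = 1 ∧
        x = Real.sqrt (2 - 2 * ∑ i, Real.sqrt (p i) * (h1.sqrt i i * h2.sqrt i i).re)}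
      = Real.sqrt (2 * (1 - Real.sqrt (p ⟨0, hn⟩))) := by
  set i0 : Fin n := ⟨0, hn⟩
  have hp0le1 : p i0 ≤ 1 := by
    rw [← hsum]
    exact Finset.single_le_sum (fun i _ => hnn i) (Finset.mem_univ i0)
  have hsq0 : Real.sqrt (p i0) ≤ 1 := by
    rw [show (1:ℝ) = Real.sqrt 1 by simp]
    exact Real.sqrt_le_sqrt hp0le1
  -- Lower bound: every element of the set is ≥ the claimed value
  have hlb : ∀ x ∈ {x : ℝ | ∃ (δA δB : Matrix (Fin n) (Fin n) ℂ)
        (h1 : δA.PosSemidef) (h2 : δB.PosSemidef), δA.trace = 1 ∧ δB.trace = 1 ∧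
        x = Real.sqrt (2 - 2 * ∑ i, Real.sqrt (p i) * (h1.sqrt i i * h2.sqrt i i).re)},
      Real.sqrt (2 * (1 - Real.sqrt (p i0))) ≤ x := by
    rintro x ⟨δA, δB, h1, h2, htrA, htrB, rfl⟩
    apply Real.sqrt_le_sqrt
    have ha := fun i => diag_psd h1.posSemidef_sqrt i
    have hb := fun i => diag_psd h2.posSemidef_sqrt i
    set a : Fin n → ℝ := fun i => (h1.sqrt i i).re
    set b : Fin n → ℝ := fun i => (h2.sqrt i i).re
    have hre : ∀ i, (h1.sqrt i i * h2.sqrt i i).re = a i * b i := by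
      intro i
      rw [Complex.mul_re, (ha i).2, (hb i).2]
      ring
    have hsumab : ∑ i, a i * b i ≤ 1 := by
      have := Real.sum_mul_le_sqrt_mul_sqrt Finset.univ a b
      have hA2 := sqrt_diag_sq_sum_le h1 htrA
      have hB2 := sqrt_diag_sq_sum_le h2 htrB
      have h1' : Real.sqrt (∑ i, a i ^ 2) ≤ 1 := by
        rw [show (1:ℝ) = Real.sqrt 1 by simp]; exact Real.sqrt_le_sqrt hA2
      have h2' : Real.sqrt (∑ i, b i ^ 2) ≤ 1 := by
        rw [show (1:ℝ) = Real.sqrt 1 by simp]; exact Real.sqrt_le_sqrt hB2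
      calc ∑ i, a i * b i ≤ _ := this
        _ ≤ 1 * 1 := mul_le_mul h1' h2' (Real.sqrt_nonneg _) zero_le_one
        _ = 1 := by ring
    have hkey : ∑ i, Real.sqrt (p i) * (h1.sqrt i i * h2.sqrt i i).re
        ≤ Real.sqrt (p i0) := by
      calc ∑ i, Real.sqrt (p i) * (h1.sqrt i i * h2.sqrt i i).re
          = ∑ i, Real.sqrt (p i) * (a i * b i) := by simp_rw [hre]
        _ ≤ ∑ i, Real.sqrt (p i0) * (a i * b i) := by
            apply Finset.sum_le_sum
            intro i _
            apply mul_le_mul_of_nonneg_right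
            · exact Real.sqrt_le_sqrt (hanti (by rw [Fin.le_def]; exact Nat.zero_le _))
            · exact mul_nonneg (ha i).1 (hb i).1
        _ = Real.sqrt (p i0) * ∑ i, a i * b i := by rw [Finset.mul_sum]
        _ ≤ Real.sqrt (p i0) * 1 :=
            mul_le_mul_of_nonneg_left hsumab (Real.sqrt_nonneg _)
        _ = Real.sqrt (p i0) := mul_one _
    linarith
  -- Membership: the claimed value is in the set
  have hmem : Real.sqrt (2 * (1 - Real.sqrt (p i0))) ∈ {x : ℝ |
      ∃ (δA δB : Matrix (Fin n) (Fin n) ℂ)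
        (h1 : δA.PosSemidef) (h2 : δB.PosSemidef), δA.trace = 1 ∧ δB.trace = 1 ∧
        x = Real.sqrt (2 - 2 * ∑ i, Real.sqrt (p i) * (h1.sqrt i i * h2.sqrt i i).re)} := by
    set d : Fin n → ℂ := fun i => if i = i0 then 1 else 0 with hd
    have hdnn : 0 ≤ d := by
      intro i
      by_cases h : i = i0 <;> simp [hd, h]
    have hpsd : (Matrix.diagonal d).PosSemidef := .diagonal hdnn
    have hsq : (Matrix.diagonal d) ^ 2 = Matrix.diagonal d := by
      rw [pow_two, diagonal_mul_diagonal]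
      have hfun : (fun i => d i * d i) = d := by
        funext i
        by_cases h : i = i0 <;> simp [hd, h]
      rw [hfun]
    have hsqrt : hpsd.sqrt = Matrix.diagonal d :=
      (hpsd.eq_sqrt_of_sq_eq hpsd hsq).symm
    have htr : (Matrix.diagonal d).trace = 1 := by
      rw [trace_diagonal]
      rw [Finset.sum_ite_eq' Finset.univ i0 (fun _ => (1:ℂ))]
      simp
    refine ⟨Matrix.diagonal d, Matrix.diagonal d, hpsd, hpsd, htr, htr, ?_⟩
    have hsum' : ∑ i, Real.sqrt (p i) * (hpsd.sqrt i i * hpsd.sqrt i i).re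
        = Real.sqrt (p i0) := by
      rw [hsqrt]
      rw [show ∑ i, Real.sqrt (p i) * ((Matrix.diagonal d) i i * (Matrix.diagonal d) i i).re
          = ∑ i, if i = i0 then Real.sqrt (p i) else 0 by
        apply Finset.sum_congr rfl
        intro i _
        by_cases h : i = i0 <;> simp [diagonal_apply_eq, hd, h]]
      simp
    rw [hsum']
    ring_nf
  exact le_antisymm (csInf_le ⟨_, hlb⟩ hmem) (le_csInf ⟨_, hmem⟩ hlb)
end

section
/- For a separable state ρ on H_A ⊗ H_B (a convex combination of product states), the mutual information satisfies I(ρ) = S(ρ_A) + S(ρ_B) - S(ρ) ≤ S(ρ_A), since S(ρ_B) ≤ S(ρ) for separable ρ. -/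
open Matrix Kronecker ComplexOrder

/-- Partial trace over the second tensor factor. -/
noncomputable def ptraceB {α β : Type*} [Fintype β]
    (M : Matrix (α × β) (α × β) ℂ) : Matrix α α ℂ :=
  Matrix.of fun i j => ∑ k, M (i, k) (j, k)

/-- Partial trace over the first tensor factor. -/
noncomputable def ptraceA {α β : Type*} [Fintype α]
    (M : Matrix (α × β) (α × β) ℂ) : Matrix β β ℂ :=
  Matrix.of fun i j => ∑ k, M (k, i) (k, j)

/-- Von Neumann entropy of a Hermitian matrix, `-∑ λᵢ log λᵢ` over its eigenvalues. -/
noncomputable def vN {m : Type*} [Fintype m] [DecidableEq m] {ρ : Matrix m m ℂ}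
    (h : ρ.IsHermitian) : ℝ :=
  -∑ i, h.eigenvalues i * Real.log (h.eigenvalues i)

namespace Stmt14

open Complex Finset

noncomputable def cdot {d : Type*} [Fintype d] (u v : d → ℂ) : ℂ :=
  ∑ p, (starRingEnd ℂ) (u p) * v p

/-- Key extension lemma: from a family `z` and spectral data `(e, r)` satisfying the
Gram-type relation, produce a unitary `B` (given by row/column orthonormality), padded
eigenvalues `r'` and padded eigenvectors `e'` with `∑ᵢ B k i • z i = √(r' k) • e' k`. -/
theorem side {ι κ d : Type*} [Fintype ι] [DecidableEq ι] [Fintype κ] [DecidableEq κ] [Fintype d] [DecidableEq d]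
    (z : κ → d → ℂ) (e : ι → d → ℂ) (r : ι → ℝ)
    (hcomp : ∀ p q, ∑ j, (starRingEnd ℂ) (e j p) * e j q = if p = q then 1 else 0)
    (horth : ∀ j j', cdot (e j) (e j') = if j = j' then 1 else 0)
    (Hr : ∀ j j', ∑ i, cdot (e j) (z i) * (starRingEnd ℂ) (cdot (e j') (z i))
        = if j = j' then (r j : ℂ) else 0) :
    ∃ (B : κ → κ → ℂ) (r' : κ → ℝ) (e' : κ → d → ℂ),
      (∀ k, 0 ≤ r' k) ∧
      (∑ k, Real.negMulLog (r' k) = ∑ j, Real.negMulLog (r j)) ∧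
      (∀ k k', ∑ i, (starRingEnd ℂ) (B k i) * B k' i = if k = k' then 1 else 0) ∧
      (∀ i i', ∑ k, (starRingEnd ℂ) (B k i) * B k i' = if i = i' then 1 else 0) ∧
      (∀ k p, ∑ i, B k i * z i p = (Real.sqrt (r' k) : ℂ) * e' k p) ∧
      (∀ k k', r' k ≠ 0 → r' k' ≠ 0 → cdot (e' k) (e' k') = if k = k' then 1 else 0) := by
  classical
  -- `r j` is a sum of `normSq`s, hence nonnegative
  have hrsum : ∀ j, (r j : ℂ) = ∑ i, (Complex.normSq (cdot (e j) (z i)) : ℂ) := by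
    intro j
    have h := Hr j j
    rw [if_pos rfl] at h
    rw [← h]
    exact Finset.sum_congr rfl fun i _ => Complex.mul_conj _
  have hrsumR : ∀ j, r j = ∑ i, Complex.normSq (cdot (e j) (z i)) := by
    intro j; exact_mod_cast hrsum j
  have hr0 : ∀ j, 0 ≤ r j := fun j => by
    rw [hrsumR j]; exact Finset.sum_nonneg fun i _ => Complex.normSq_nonneg _
  have hzero : ∀ j, r j = 0 → ∀ i, cdot (e j) (z i) = 0 := by
    intro j hj i
    have h1 := hrsumR j
    rw [hj] at h1
    have h2 := (Finset.sum_eq_zero_iff_of_nonneg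
      (fun i _ => Complex.normSq_nonneg (cdot (e j) (z i)))).mp h1.symm i (Finset.mem_univ i)
    exact Complex.normSq_eq_zero.mp h2
  -- the support of `r`
  set S : Finset ι := Finset.univ.filter (fun j => r j ≠ 0) with hSdef
  have hmemS : ∀ {j}, r j ≠ 0 → j ∈ S := fun h => Finset.mem_filter.mpr ⟨Finset.mem_univ _, h⟩
  have hrS : ∀ j : S, r j.1 ≠ 0 := fun j => (Finset.mem_filter.mp j.2).2
  have hrpos : ∀ j : S, 0 < r j.1 := fun j => lt_of_le_of_ne (hr0 j.1) (Ne.symm (hrS j))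
  have hsqrt_ne : ∀ j : S, (Real.sqrt (r j.1) : ℂ) ≠ 0 := by
    intro j
    simp only [ne_eq, Complex.ofReal_eq_zero]
    exact ne_of_gt (Real.sqrt_pos.mpr (hrpos j))
  have hsq : ∀ j : S, (Real.sqrt (r j.1) : ℂ) * (Real.sqrt (r j.1) : ℂ) = (r j.1 : ℂ) := by
    intro j
    rw [← Complex.ofReal_mul, Real.mul_self_sqrt (hr0 j.1)]
  -- the (conjugated, normalized) coefficient vectors, orthonormal in `EuclideanSpace ℂ κ`
  let u : S → EuclideanSpace ℂ κ := fun j =>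
    WithLp.toLp 2 (fun i => (starRingEnd ℂ) (cdot (e j.1) (z i)) / (Real.sqrt (r j.1) : ℂ))
  have hu_apply : ∀ (j : S) (i : κ),
      u j i = (starRingEnd ℂ) (cdot (e j.1) (z i)) / (Real.sqrt (r j.1) : ℂ) := fun j i => rfl
  have hinner : ∀ j j' : S, (inner ℂ (u j) (u j') : ℂ) = if j = j' then 1 else 0 := by
    intro j j'
    rw [PiLp.inner_apply]
    have hterm : ∀ i, (inner ℂ (u j i) (u j' i) : ℂ) =
        (cdot (e j.1) (z i) * (starRingEnd ℂ) (cdot (e j'.1) (z i))) /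
          ((Real.sqrt (r j.1) : ℂ) * (Real.sqrt (r j'.1) : ℂ)) := by
      intro i
      rw [RCLike.inner_apply, hu_apply, hu_apply, map_div₀, Complex.conj_conj, Complex.conj_ofReal]
      ring
    rw [Finset.sum_congr rfl fun i _ => hterm i, ← Finset.sum_div, Hr]
    by_cases h : j = j'
    · subst h
      rw [if_pos rfl, if_pos rfl, hsq j, div_self]
      exact Complex.ofReal_ne_zero.mpr (hrS j)
    · have h2 : j.1 ≠ j'.1 := fun hc => h (Subtype.ext hc)
      rw [if_neg h2, if_neg h, zero_div]
  have hON : Orthonormal ℂ u := orthonormal_iff_ite.mpr hinner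
  have hcard : Fintype.card S ≤ Fintype.card κ := by
    have h1 := hON.linearIndependent.fintype_card_le_finrank
    simpa [finrank_euclideanSpace] using h1
  obtain ⟨φ⟩ : Nonempty (S ↪ κ) := Function.Embedding.nonempty_of_card_le hcard
  -- extend to an orthonormal basis
  let v : κ → EuclideanSpace ℂ κ := Function.extend φ u 0
  have hv : ∀ j : S, v (φ j) = u j := fun j => φ.injective.extend_apply u 0 j
  have hrestrict : Orthonormal ℂ ((Set.range φ).restrict v) := by
    rw [orthonormal_iff_ite]
    rintro ⟨k, j, rfl⟩ ⟨k', j', rfl⟩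
    show inner ℂ (v (φ j)) (v (φ j')) = _
    rw [hv, hv]
    rw [hinner j j']
    by_cases h : j = j'
    · subst h; simp
    · have h2 : (⟨φ j, ⟨j, rfl⟩⟩ : Set.range φ) ≠ ⟨φ j', ⟨j', rfl⟩⟩ := by
        simp only [ne_eq, Subtype.mk.injEq, EmbeddingLike.apply_eq_iff_eq]
        exact fun hc => h (φ.injective (congrArg Subtype.val hc))
      rw [if_neg h, if_neg h2]
  obtain ⟨β, hβ⟩ := hrestrict.exists_orthonormalBasis_extension_of_card_eq
    (by simp [finrank_euclideanSpace])
  have hβφ : ∀ j : S, β (φ j) = u j := fun j => (hβ _ ⟨j, rfl⟩).trans (hv j)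
  have hβON := β.orthonormal
  rw [orthonormal_iff_ite] at hβON
  have hBrow : ∀ k k', ∑ i, (starRingEnd ℂ) (β k i) * β k' i = if k = k' then 1 else 0 := by
    intro k k'
    have h := hβON k k'
    rw [PiLp.inner_apply] at h
    simpa [RCLike.inner_apply, mul_comm] using h
  -- the key single-row computation
  have hterm : ∀ (j : S) (k : κ), ∑ i, β k i * cdot (e j.1) (z i)
      = if k = φ j then (Real.sqrt (r j.1) : ℂ) else 0 := by
    intro j k
    have h1 : ∀ i, cdot (e j.1) (z i) = (starRingEnd ℂ) (u j i) * (Real.sqrt (r j.1) : ℂ) := by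
      intro i
      rw [hu_apply, map_div₀, Complex.conj_conj, Complex.conj_ofReal]
      rw [div_mul_cancel₀ _ (hsqrt_ne j)]
    calc ∑ i, β k i * cdot (e j.1) (z i)
        = (starRingEnd ℂ) (∑ i, (starRingEnd ℂ) (β k i) * u j i) * (Real.sqrt (r j.1) : ℂ) := by
          rw [map_sum, Finset.sum_mul]
          refine Finset.sum_congr rfl fun i _ => ?_
          rw [h1 i, _root_.map_mul, Complex.conj_conj]
          ring
      _ = (starRingEnd ℂ) ((inner ℂ (β k) (β (φ j)) : ℂ)) * (Real.sqrt (r j.1) : ℂ) := by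
          rw [hβφ j, PiLp.inner_apply]
          simp [RCLike.inner_apply, mul_comm]
      _ = if k = φ j then (Real.sqrt (r j.1) : ℂ) else 0 := by
          rw [hβON k (φ j)]
          by_cases h : k = φ j <;> simp [h]
  -- the data
  refine ⟨fun k i => β k i, Function.extend φ (fun j => r j.1) 0,
    Function.extend φ (fun j => e j.1) 0, ?_, ?_, ?_, ?_, ?_, ?_⟩
  · -- nonnegativity
    intro k
    rcases em (∃ j : S, φ j = k) with ⟨j, rfl⟩ | h
    · rw [φ.injective.extend_apply]; exact hr0 _
    · rw [Function.extend_apply' _ _ _ h]; exact le_refl 0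
  · -- entropy sums agree
    have h1 : ∑ k, Real.negMulLog (Function.extend φ (fun j => r j.1) 0 k)
        = ∑ k ∈ Finset.univ.map φ, Real.negMulLog (Function.extend φ (fun j => r j.1) 0 k) := by
      symm
      apply Finset.sum_subset (Finset.subset_univ _)
      intro k _ hk
      have h2 : ¬∃ j : S, φ j = k := by
        rintro ⟨j, rfl⟩; exact hk (Finset.mem_map.mpr ⟨j, Finset.mem_univ _, rfl⟩)
      rw [Function.extend_apply' _ _ _ h2]
      simp [Real.negMulLog_zero]
    rw [h1, Finset.sum_map]
    have h2 : ∀ j : S, Function.extend φ (fun j => r j.1) 0 (φ j) = r j.1 :=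
      fun j => φ.injective.extend_apply _ _ j
    simp only [h2]
    rw [Finset.sum_coe_sort S (fun j => Real.negMulLog (r j))]
    apply Finset.sum_filter_of_ne
    intro j _ hj hrj
    rw [hrj] at hj
    exact hj Real.negMulLog_zero
  · -- rows orthonormal
    exact hBrow
  · -- columns orthonormal
    have h1 : (Matrix.of fun k i => β k i) * (Matrix.of fun k i => β k i)ᴴ = 1 := by
      ext k k'
      simp only [Matrix.mul_apply, Matrix.conjTranspose_apply, Matrix.of_apply, Matrix.one_apply]
      have h2 : ∑ i, (β k i) * star (β k' i) = ∑ i, (starRingEnd ℂ) (β k' i) * β k i :=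
        Finset.sum_congr rfl fun i _ => mul_comm _ _
      rw [h2, hBrow k' k]
      by_cases h : k = k' <;> simp [h, eq_comm]
    have h2 := mul_eq_one_comm.mp h1
    intro i i'
    have h3 : ((Matrix.of fun k i => β k i)ᴴ * (Matrix.of fun k i => β k i)) i i'
        = (1 : Matrix κ κ ℂ) i i' := by rw [h2]
    simpa [Matrix.mul_apply, Matrix.conjTranspose_apply, Matrix.one_apply] using h3
  · -- the key identity
    intro k p
    have hz : ∀ i, z i p = ∑ j, cdot (e j) (z i) * e j p := by
      intro i
      have h1 : ∀ j, cdot (e j) (z i) * e j p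
          = ∑ q, (starRingEnd ℂ) (e j q) * e j p * z i q := by
        intro j
        show (∑ q, (starRingEnd ℂ) (e j q) * z i q) * e j p = _
        rw [Finset.sum_mul]
        exact Finset.sum_congr rfl fun q _ => by ring
      calc z i p = ∑ q, z i q * (if q = p then 1 else 0) := by simp
        _ = ∑ q, z i q * ∑ j, (starRingEnd ℂ) (e j q) * e j p :=
            Finset.sum_congr rfl fun q _ => by rw [hcomp q p]
        _ = ∑ q, ∑ j, (starRingEnd ℂ) (e j q) * e j p * z i q :=
            Finset.sum_congr rfl fun q _ => by
              rw [Finset.mul_sum]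
              exact Finset.sum_congr rfl fun j _ => by ring
        _ = ∑ j, ∑ q, (starRingEnd ℂ) (e j q) * e j p * z i q := Finset.sum_comm
        _ = ∑ j, cdot (e j) (z i) * e j p := Finset.sum_congr rfl fun j _ => (h1 j).symm
    calc ∑ i, β k i * z i p
        = ∑ i, ∑ j, β k i * (cdot (e j) (z i) * e j p) := by
          refine Finset.sum_congr rfl fun i _ => ?_
          rw [hz i, Finset.mul_sum]
      _ = ∑ j, (∑ i, β k i * cdot (e j) (z i)) * e j p := by
          rw [Finset.sum_comm]
          refine Finset.sum_congr rfl fun j _ => ?_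
          rw [Finset.sum_mul]
          exact Finset.sum_congr rfl fun i _ => by ring
      _ = ∑ j, (if h : r j ≠ 0 then
            (if k = φ ⟨j, hmemS h⟩ then (Real.sqrt (r j) : ℂ) else 0) * e j p else 0) := by
          refine Finset.sum_congr rfl fun j _ => ?_
          by_cases h : r j ≠ 0
          · rw [dif_pos h, hterm ⟨j, hmemS h⟩ k]
          · rw [dif_neg h]
            push_neg at h
            have h0 : ∀ i, cdot (e j) (z i) = 0 := hzero j h
            simp [h0]
      _ = (Real.sqrt (Function.extend φ (fun j => r j.1) 0 k) : ℂ)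
            * Function.extend φ (fun j => e j.1) 0 k p := by
          rcases em (∃ j : S, φ j = k) with ⟨j₀, rfl⟩ | hk
          · rw [Finset.sum_eq_single j₀.1]
            · have h : r j₀.1 ≠ 0 := hrS j₀
              rw [dif_pos h]
              have he : (⟨j₀.1, hmemS h⟩ : S) = j₀ := Subtype.ext rfl
              rw [he, if_pos rfl, φ.injective.extend_apply, φ.injective.extend_apply]
            · intro j _ hne
              by_cases h : r j ≠ 0
              · rw [dif_pos h]
                have hne2 : φ j₀ ≠ φ ⟨j, hmemS h⟩ := by
                  intro hc
                  exact hne (congrArg Subtype.val (φ.injective hc)).symm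
                rw [if_neg hne2, zero_mul]
              · rw [dif_neg h]
            · intro h; exact absurd (Finset.mem_univ _) h
          · rw [Function.extend_apply' _ _ _ hk, Function.extend_apply' _ _ _ hk]
            rw [Finset.sum_eq_zero]
            · simp
            · intro j _
              by_cases h : r j ≠ 0
              · rw [dif_pos h, if_neg (fun hc => hk ⟨⟨j, hmemS h⟩, hc.symm⟩), zero_mul]
              · rw [dif_neg h]
  · -- orthonormality of e' on the support
    intro k k' h h'
    have hk : ∃ j : S, φ j = k := by
      by_contra hc
      exact h (Function.extend_apply' _ _ _ hc)
    have hk' : ∃ j : S, φ j = k' := by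
      by_contra hc
      exact h' (Function.extend_apply' _ _ _ hc)
    obtain ⟨j, rfl⟩ := hk
    obtain ⟨j', rfl⟩ := hk'
    rw [φ.injective.extend_apply, φ.injective.extend_apply, horth]
    by_cases hjj : j = j'
    · subst hjj; simp
    · have h2 : j.1 ≠ j'.1 := fun hc => hjj (Subtype.ext hc)
      rw [if_neg h2, if_neg (fun hc => hjj (φ.injective hc))]

/-- Factorization of a bilinear `normSq` sum. -/
theorem bilin {α β γ : Type*} [Fintype α] [Fintype β] [Fintype γ]
    (A : γ → α → ℂ) (Bf : γ → β → ℂ) :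
    ∑ s, ∑ t, (starRingEnd ℂ) (∑ l, A l s * Bf l t) * (∑ l, A l s * Bf l t)
      = ∑ l, ∑ l', (∑ s, (starRingEnd ℂ) (A l s) * A l' s)
          * (∑ t, (starRingEnd ℂ) (Bf l t) * Bf l' t) := by
  calc ∑ s, ∑ t, (starRingEnd ℂ) (∑ l, A l s * Bf l t) * (∑ l, A l s * Bf l t)
      = ∑ s, ∑ t, ∑ l, ∑ l', ((starRingEnd ℂ) (A l s) * A l' s)
          * ((starRingEnd ℂ) (Bf l t) * Bf l' t) := by
        refine Finset.sum_congr rfl fun s _ => Finset.sum_congr rfl fun t _ => ?_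
        rw [map_sum, Finset.sum_mul_sum]
        refine Finset.sum_congr rfl fun l _ => Finset.sum_congr rfl fun l' _ => ?_
        simp only [_root_.map_mul]
        ring
    _ = ∑ s, ∑ l, ∑ l', ∑ t, ((starRingEnd ℂ) (A l s) * A l' s)
          * ((starRingEnd ℂ) (Bf l t) * Bf l' t) := by
        refine Finset.sum_congr rfl fun s _ => ?_
        rw [Finset.sum_comm]
        exact Finset.sum_congr rfl fun l _ => Finset.sum_comm
    _ = ∑ l, ∑ l', ∑ s, ∑ t, ((starRingEnd ℂ) (A l s) * A l' s)
          * ((starRingEnd ℂ) (Bf l t) * Bf l' t) := by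
        rw [Finset.sum_comm]
        exact Finset.sum_congr rfl fun l _ => Finset.sum_comm
    _ = ∑ l, ∑ l', (∑ s, (starRingEnd ℂ) (A l s) * A l' s)
          * (∑ t, (starRingEnd ℂ) (Bf l t) * Bf l' t) := by
        refine Finset.sum_congr rfl fun l _ => Finset.sum_congr rfl fun l' _ => ?_
        rw [Finset.sum_mul_sum]

/-- A doubly-indexed `normSq` sum against a unitary family collapses. -/
theorem quad_sum {κ α : Type*} [Fintype κ] [DecidableEq κ] [Fintype α]
    (g : κ → κ → ℂ) (a : κ → ℂ) (x : κ → α → ℂ)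
    (hg : ∀ i i', ∑ m, g m i * (starRingEnd ℂ) (g m i') = if i = i' then 1 else 0)
    (hax : ∑ i, ((starRingEnd ℂ) (a i) * a i)
        * (∑ s, (starRingEnd ℂ) (x i s) * x i s) = 1) :
    ∑ m, ∑ s, (starRingEnd ℂ) (∑ i, a i * (starRingEnd ℂ) (g m i) * x i s)
        * (∑ i, a i * (starRingEnd ℂ) (g m i) * x i s) = 1 := by
  calc ∑ m, ∑ s, (starRingEnd ℂ) (∑ i, a i * (starRingEnd ℂ) (g m i) * x i s)
        * (∑ i, a i * (starRingEnd ℂ) (g m i) * x i s)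
      = ∑ m, ∑ s, ∑ i, ∑ i', (((starRingEnd ℂ) (a i) * a i')
          * (g m i * (starRingEnd ℂ) (g m i'))) * ((starRingEnd ℂ) (x i s) * x i' s) := by
        refine Finset.sum_congr rfl fun m _ => Finset.sum_congr rfl fun s _ => ?_
        rw [map_sum, Finset.sum_mul_sum]
        refine Finset.sum_congr rfl fun i _ => Finset.sum_congr rfl fun i' _ => ?_
        simp only [_root_.map_mul, Complex.conj_conj]
        ring
    _ = ∑ m, ∑ i, ∑ i', ∑ s, (((starRingEnd ℂ) (a i) * a i')
          * (g m i * (starRingEnd ℂ) (g m i'))) * ((starRingEnd ℂ) (x i s) * x i' s) := by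
        refine Finset.sum_congr rfl fun m _ => ?_
        rw [Finset.sum_comm]
        exact Finset.sum_congr rfl fun i _ => Finset.sum_comm
    _ = ∑ i, ∑ i', ∑ m, ∑ s, (((starRingEnd ℂ) (a i) * a i')
          * (g m i * (starRingEnd ℂ) (g m i'))) * ((starRingEnd ℂ) (x i s) * x i' s) := by
        rw [Finset.sum_comm]
        exact Finset.sum_congr rfl fun i _ => Finset.sum_comm
    _ = ∑ i, ∑ i', (∑ m, ((starRingEnd ℂ) (a i) * a i')
          * (g m i * (starRingEnd ℂ) (g m i')))
          * (∑ s, (starRingEnd ℂ) (x i s) * x i' s) := by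
        refine Finset.sum_congr rfl fun i _ => Finset.sum_congr rfl fun i' _ => ?_
        exact (Finset.sum_mul_sum Finset.univ Finset.univ
          (fun m => ((starRingEnd ℂ) (a i) * a i') * (g m i * (starRingEnd ℂ) (g m i')))
          (fun s => (starRingEnd ℂ) (x i s) * x i' s)).symm
    _ = ∑ i, ∑ i', (((starRingEnd ℂ) (a i) * a i') * (if i = i' then 1 else 0))
          * (∑ s, (starRingEnd ℂ) (x i s) * x i' s) := by
        refine Finset.sum_congr rfl fun i _ => Finset.sum_congr rfl fun i' _ => ?_
        have hm : (∑ m, ((starRingEnd ℂ) (a i) * a i') * (g m i * (starRingEnd ℂ) (g m i')))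
            = ((starRingEnd ℂ) (a i) * a i') * (if i = i' then 1 else 0) := by
          rw [← Finset.mul_sum, hg i i']
        rw [hm]
    _ = ∑ i, ((starRingEnd ℂ) (a i) * a i) * (∑ s, (starRingEnd ℂ) (x i s) * x i s) := by
        refine Finset.sum_congr rfl fun i _ => ?_
        rw [Finset.sum_eq_single i]
        · rw [if_pos rfl, mul_one]
        · intro i' _ hne
          rw [if_neg (fun hc => hne hc.symm), mul_zero, zero_mul]
        · intro h; exact absurd (Finset.mem_univ _) h
    _ = 1 := hax

/-- Core inequality: entropy of the eigenvalue list of the `B`-marginal is at most that of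
the global state, given a pure-product decomposition. -/
theorem core {a b : ℕ} {κ : Type*} [Fintype κ] [DecidableEq κ]
    (x : κ → Fin a → ℂ) (w : κ → Fin b → ℂ)
    (hx : ∀ i, ∑ s, (starRingEnd ℂ) (x i s) * x i s = 1)
    (e : (Fin a × Fin b) → (Fin a × Fin b) → ℂ) (r : Fin a × Fin b → ℝ)
    (hcompE : ∀ p q, ∑ j, (starRingEnd ℂ) (e j p) * e j q = if p = q then 1 else 0)
    (horthE : ∀ j j', cdot (e j) (e j') = if j = j' then 1 else 0)
    (Hr : ∀ j j', ∑ i, cdot (e j) (fun p => x i p.1 * w i p.2)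
        * (starRingEnd ℂ) (cdot (e j') (fun p => x i p.1 * w i p.2))
        = if j = j' then (r j : ℂ) else 0)
    (f : Fin b → Fin b → ℂ) (μ : Fin b → ℝ)
    (hcompF : ∀ t t', ∑ l, (starRingEnd ℂ) (f l t) * f l t' = if t = t' then 1 else 0)
    (horthF : ∀ l l', cdot (f l) (f l') = if l = l' then 1 else 0)
    (Hmu : ∀ l l', ∑ i, cdot (f l) (w i) * (starRingEnd ℂ) (cdot (f l') (w i))
        = if l = l' then (μ l : ℂ) else 0) :
    ∑ l, Real.negMulLog (μ l) ≤ ∑ j, Real.negMulLog (r j) := by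
  classical
  obtain ⟨B, r', e', hr'0, hrsum, hBrow, hBcol, hBkey, he'⟩ :=
    side (d := Fin a × Fin b) (ι := Fin a × Fin b) (κ := κ)
      (fun i (p : Fin a × Fin b) => x i p.1 * w i p.2) e r hcompE horthE Hr
  obtain ⟨C, μ', f', hμ'0, hμsum, hCrow, hCcol, hCkey, hf'⟩ :=
    side (d := Fin b) (ι := Fin b) (κ := κ) w f μ hcompF horthF Hmu
  -- the matrix of overlaps and its `normSq`s
  set c : κ → κ → Fin a → ℂ :=
    fun k l s => ∑ i, B k i * (starRingEnd ℂ) (C l i) * x i s with hc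
  set D : κ → κ → ℝ := fun k l => ∑ s, Complex.normSq (c k l s) with hD
  have hD0 : ∀ k l, 0 ≤ D k l := fun k l =>
    Finset.sum_nonneg fun s _ => Complex.normSq_nonneg _
  have hDcc : ∀ k l, (∑ s, (starRingEnd ℂ) (c k l s) * c k l s) = ((D k l : ℝ) : ℂ) := by
    intro k l
    rw [hD]
    push_cast
    exact Finset.sum_congr rfl fun s _ => (Complex.normSq_eq_conj_mul_self).symm
  -- inner products of the vectors ω l = √(μ' l) • f' l
  have hωip : ∀ l l', (∑ t, (starRingEnd ℂ) ((Real.sqrt (μ' l) : ℂ) * f' l t)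
      * ((Real.sqrt (μ' l') : ℂ) * f' l' t)) = if l = l' then (μ' l : ℂ) else 0 := by
    intro l l'
    have h1 : (∑ t, (starRingEnd ℂ) ((Real.sqrt (μ' l) : ℂ) * f' l t)
        * ((Real.sqrt (μ' l') : ℂ) * f' l' t))
        = (Real.sqrt (μ' l) : ℂ) * (Real.sqrt (μ' l') : ℂ) * cdot (f' l) (f' l') := by
      rw [cdot, Finset.mul_sum]
      refine Finset.sum_congr rfl fun t _ => ?_
      rw [_root_.map_mul, Complex.conj_ofReal]
      ring
    by_cases h0 : μ' l = 0
    · rw [h1, h0]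
      by_cases hll : l = l' <;> simp [hll, h0]
    · by_cases h0' : μ' l' = 0
      · rw [h1, h0']
        by_cases hll : l = l'
        · exact absurd (hll ▸ h0') h0
        · simp [hll]
      · rw [h1, hf' l l' h0 h0']
        by_cases hll : l = l'
        · subst hll
          rw [if_pos rfl, if_pos rfl, mul_one, ← Complex.ofReal_mul,
            Real.mul_self_sqrt (hμ'0 l)]
        · rw [if_neg hll, if_neg hll, mul_zero]
  -- G1 : the B-marginal expansion of the rows of the global unitary
  have G1 : ∀ k (s : Fin a) (t : Fin b),
      ∑ l, c k l s * (∑ i, C l i * w i t) = ∑ i, B k i * (x i s * w i t) := by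
    intro k s t
    have h1 : ∀ l, c k l s * (∑ i', C l i' * w i' t)
        = ∑ i, ∑ i', (B k i * x i s * w i' t) * ((starRingEnd ℂ) (C l i) * C l i') := by
      intro l
      rw [hc]
      rw [Finset.sum_mul_sum]
      exact Finset.sum_congr rfl fun i _ => Finset.sum_congr rfl fun i' _ => by ring
    calc ∑ l, c k l s * (∑ i, C l i * w i t)
        = ∑ l, ∑ i, ∑ i', (B k i * x i s * w i' t) * ((starRingEnd ℂ) (C l i) * C l i') :=
          Finset.sum_congr rfl fun l _ => h1 l
      _ = ∑ i, ∑ i', ∑ l, (B k i * x i s * w i' t) * ((starRingEnd ℂ) (C l i) * C l i') := by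
          rw [Finset.sum_comm]
          exact Finset.sum_congr rfl fun i _ => Finset.sum_comm
      _ = ∑ i, ∑ i', (B k i * x i s * w i' t) * (if i = i' then 1 else 0) := by
          refine Finset.sum_congr rfl fun i _ => Finset.sum_congr rfl fun i' _ => ?_
          rw [← Finset.mul_sum, hCcol i i']
      _ = ∑ i, B k i * (x i s * w i t) := by
          refine Finset.sum_congr rfl fun i _ => ?_
          rw [Finset.sum_eq_single i]
          · rw [if_pos rfl, mul_one, mul_assoc]
          · intro i' _ hne
            rw [if_neg (fun hcc => hne hcc.symm), mul_zero]
          · intro h; exact absurd (Finset.mem_univ _) h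
  -- F1 : r' k = ∑ l, D k l * μ' l
  have F1 : ∀ k, r' k = ∑ l, D k l * μ' l := by
    intro k
    have hA1 : ∑ p : Fin a × Fin b, (starRingEnd ℂ) (∑ i, B k i * (x i p.1 * w i p.2))
        * (∑ i, B k i * (x i p.1 * w i p.2)) = ((r' k : ℝ) : ℂ) := by
      have h2 : ∀ p : Fin a × Fin b, (starRingEnd ℂ) (∑ i, B k i * (x i p.1 * w i p.2))
          * (∑ i, B k i * (x i p.1 * w i p.2))
          = ((r' k : ℝ) : ℂ) * ((starRingEnd ℂ) (e' k p) * e' k p) := by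
        intro p
        rw [hBkey k p, _root_.map_mul, Complex.conj_ofReal]
        have h3 : ((Real.sqrt (r' k) : ℂ)) * ((Real.sqrt (r' k) : ℂ)) = ((r' k : ℝ) : ℂ) := by
          rw [← Complex.ofReal_mul, Real.mul_self_sqrt (hr'0 k)]
        calc (Real.sqrt (r' k) : ℂ) * (starRingEnd ℂ) (e' k p)
              * ((Real.sqrt (r' k) : ℂ) * e' k p)
            = ((Real.sqrt (r' k) : ℂ) * (Real.sqrt (r' k) : ℂ))
              * ((starRingEnd ℂ) (e' k p) * e' k p) := by ring
          _ = ((r' k : ℝ) : ℂ) * ((starRingEnd ℂ) (e' k p) * e' k p) := by rw [h3]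
      rw [Finset.sum_congr rfl fun p _ => h2 p, ← Finset.mul_sum]
      by_cases h : r' k = 0
      · rw [h]; simp
      · have h3 : ∑ p, (starRingEnd ℂ) (e' k p) * e' k p = 1 := by
          have h4 := he' k k h h
          rw [if_pos rfl] at h4
          rw [← h4, cdot]
        rw [h3, mul_one]
    have hB2 : ∑ p : Fin a × Fin b, (starRingEnd ℂ) (∑ i, B k i * (x i p.1 * w i p.2))
        * (∑ i, B k i * (x i p.1 * w i p.2)) = ∑ l, (μ' l : ℂ) * ((D k l : ℝ) : ℂ) := by
      calc ∑ p : Fin a × Fin b, (starRingEnd ℂ) (∑ i, B k i * (x i p.1 * w i p.2))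
            * (∑ i, B k i * (x i p.1 * w i p.2))
          = ∑ s, ∑ t, (starRingEnd ℂ) (∑ l, c k l s * (∑ i, C l i * w i t))
              * (∑ l, c k l s * (∑ i, C l i * w i t)) := by
            rw [Fintype.sum_prod_type]
            refine Finset.sum_congr rfl fun s _ => Finset.sum_congr rfl fun t _ => ?_
            show (starRingEnd ℂ) (∑ i, B k i * (x i s * w i t))
              * (∑ i, B k i * (x i s * w i t)) = _
            rw [← G1 k s t]
        _ = ∑ l, ∑ l', (∑ s, (starRingEnd ℂ) (c k l s) * c k l' s)
              * (∑ t, (starRingEnd ℂ) (∑ i, C l i * w i t) * (∑ i, C l' i * w i t)) :=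
            bilin (c k) (fun l t => ∑ i, C l i * w i t)
        _ = ∑ l, ∑ l', (∑ s, (starRingEnd ℂ) (c k l s) * c k l' s)
              * (if l = l' then (μ' l : ℂ) else 0) := by
            refine Finset.sum_congr rfl fun l _ => Finset.sum_congr rfl fun l' _ => ?_
            congr 1
            calc ∑ t, (starRingEnd ℂ) (∑ i, C l i * w i t) * (∑ i, C l' i * w i t)
                = ∑ t, (starRingEnd ℂ) ((Real.sqrt (μ' l) : ℂ) * f' l t)
                    * ((Real.sqrt (μ' l') : ℂ) * f' l' t) := by
                  refine Finset.sum_congr rfl fun t _ => ?_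
                  rw [hCkey l t, hCkey l' t]
              _ = if l = l' then (μ' l : ℂ) else 0 := hωip l l'
        _ = ∑ l, (μ' l : ℂ) * ((D k l : ℝ) : ℂ) := by
            refine Finset.sum_congr rfl fun l _ => ?_
            rw [Finset.sum_eq_single l]
            · rw [if_pos rfl, hDcc k l, mul_comm]
            · intro l' _ hne
              rw [if_neg (fun hcc => hne hcc.symm), mul_zero]
            · intro h; exact absurd (Finset.mem_univ _) h
    have h4 : ((r' k : ℝ) : ℂ) = ((∑ l, D k l * μ' l : ℝ) : ℂ) := by
      rw [← hA1, hB2]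
      push_cast
      exact Finset.sum_congr rfl fun l _ => by ring
    exact_mod_cast h4
  -- F2 : row sums of D are 1
  have F2 : ∀ k, ∑ l, D k l = 1 := by
    intro k
    have hg : ∀ i i', ∑ l, C l i * (starRingEnd ℂ) (C l i') = if i = i' then 1 else 0 := by
      intro i i'
      have h1 : ∑ l, C l i * (starRingEnd ℂ) (C l i')
          = (starRingEnd ℂ) (∑ l, (starRingEnd ℂ) (C l i) * C l i') := by
        rw [map_sum]
        refine Finset.sum_congr rfl fun l _ => ?_
        rw [_root_.map_mul, Complex.conj_conj]
      rw [h1, hCcol i i']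
      by_cases h : i = i' <;> simp [h]
    have hax : ∑ i, ((starRingEnd ℂ) (B k i) * B k i)
        * (∑ s, (starRingEnd ℂ) (x i s) * x i s) = 1 := by
      calc ∑ i, ((starRingEnd ℂ) (B k i) * B k i) * (∑ s, (starRingEnd ℂ) (x i s) * x i s)
          = ∑ i, (starRingEnd ℂ) (B k i) * B k i := by
            refine Finset.sum_congr rfl fun i _ => ?_
            rw [hx i, mul_one]
        _ = 1 := by
            have h := hBrow k k
            rw [if_pos rfl] at h
            exact h
    have h1 := quad_sum C (fun i => B k i) x hg hax
    have h2 : ((∑ l, D k l : ℝ) : ℂ) = 1 := by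
      rw [← h1]
      push_cast
      refine Finset.sum_congr rfl fun l _ => ?_
      rw [hD, hc]
      push_cast
      exact Finset.sum_congr rfl fun s _ => Complex.normSq_eq_conj_mul_self
    exact_mod_cast h2
  -- F3 : column sums of D are 1
  have F3 : ∀ l, ∑ k, D k l = 1 := by
    intro l
    have hg : ∀ i i', ∑ k, (starRingEnd ℂ) (B k i)
        * (starRingEnd ℂ) ((starRingEnd ℂ) (B k i'))  = if i = i' then 1 else 0 := by
      intro i i'
      have h1 : ∀ k, (starRingEnd ℂ) (B k i) * (starRingEnd ℂ) ((starRingEnd ℂ) (B k i'))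
          = (starRingEnd ℂ) (B k i) * B k i' := fun k => by rw [Complex.conj_conj]
      rw [Finset.sum_congr rfl fun k _ => h1 k, hBcol i i']
    have hax : ∑ i, ((starRingEnd ℂ) ((starRingEnd ℂ) (C l i)) * (starRingEnd ℂ) (C l i))
        * (∑ s, (starRingEnd ℂ) (x i s) * x i s) = 1 := by
      calc ∑ i, ((starRingEnd ℂ) ((starRingEnd ℂ) (C l i)) * (starRingEnd ℂ) (C l i))
            * (∑ s, (starRingEnd ℂ) (x i s) * x i s)
          = ∑ i, (starRingEnd ℂ) (C l i) * C l i := by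
            refine Finset.sum_congr rfl fun i _ => ?_
            rw [hx i, mul_one, Complex.conj_conj]
            ring
        _ = 1 := by
            have h := hCrow l l
            rw [if_pos rfl] at h
            exact h
    have h1 := quad_sum (fun k i => (starRingEnd ℂ) (B k i))
      (fun i => (starRingEnd ℂ) (C l i)) x hg hax
    have h2 : ∀ k s, (∑ i, (starRingEnd ℂ) (C l i)
        * (starRingEnd ℂ) ((starRingEnd ℂ) (B k i)) * x i s) = c k l s := by
      intro k s
      rw [hc]
      refine Finset.sum_congr rfl fun i _ => ?_
      rw [Complex.conj_conj]
      ring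
    simp only [h2] at h1
    have h3 : ((∑ k, D k l : ℝ) : ℂ) = 1 := by
      rw [← h1]
      push_cast
      refine Finset.sum_congr rfl fun k _ => ?_
      rw [hD]
      push_cast
      exact Finset.sum_congr rfl fun s _ => Complex.normSq_eq_conj_mul_self
    exact_mod_cast h3
  -- Jensen's inequality
  have hJ : ∀ k, ∑ l, D k l * Real.negMulLog (μ' l) ≤ Real.negMulLog (r' k) := by
    intro k
    have h := Real.concaveOn_negMulLog.le_map_sum (t := Finset.univ) (w := D k) (p := μ')
      (fun l _ => hD0 k l) (F2 k) (fun l _ => Set.mem_Ici.mpr (hμ'0 l))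
    rw [F1 k]
    simpa [smul_eq_mul] using h
  calc ∑ l, Real.negMulLog (μ l) = ∑ k, Real.negMulLog (μ' k) := hμsum.symm
    _ = ∑ l, (∑ k, D k l) * Real.negMulLog (μ' l) := by
        refine Finset.sum_congr rfl fun l _ => ?_
        rw [F3 l, one_mul]
    _ = ∑ k, ∑ l, D k l * Real.negMulLog (μ' l) :=
        (Finset.sum_congr rfl fun l _ => Finset.sum_mul _ _ _).trans Finset.sum_comm
    _ ≤ ∑ k, Real.negMulLog (r' k) := Finset.sum_le_sum fun k _ => hJ k
    _ = ∑ j, Real.negMulLog (r j) := hrsum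

/-- `cdot` orthonormality of an orthonormal basis of a Euclidean space. -/
theorem onb_cdot {n : Type*} [Fintype n] [DecidableEq n]
    (β : OrthonormalBasis n ℂ (EuclideanSpace ℂ n)) (j j' : n) :
    cdot (fun p => β j p) (fun p => β j' p) = if j = j' then 1 else 0 := by
  have h := β.orthonormal
  rw [orthonormal_iff_ite] at h
  have h1 := h j j'
  rw [PiLp.inner_apply] at h1
  simpa [RCLike.inner_apply, cdot, mul_comm] using h1

/-- Completeness relation for the eigenvector basis of a Hermitian matrix. -/
theorem onb_complete {n : Type*} [Fintype n] [DecidableEq n] {A : Matrix n n ℂ}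
    (hA : A.IsHermitian) (p q : n) :
    ∑ j, (starRingEnd ℂ) (hA.eigenvectorBasis j p) * hA.eigenvectorBasis j q
      = if p = q then 1 else 0 := by
  have h := Matrix.mem_unitaryGroup_iff.mp (Matrix.IsHermitian.eigenvectorUnitary hA).2
  have h1 : ∑ j, (Matrix.IsHermitian.eigenvectorUnitary hA : Matrix n n ℂ) q j
      * (starRingEnd ℂ) ((Matrix.IsHermitian.eigenvectorUnitary hA : Matrix n n ℂ) p j)
      = if q = p then 1 else 0 := by
    have h2 : ((Matrix.IsHermitian.eigenvectorUnitary hA : Matrix n n ℂ)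
        * star (Matrix.IsHermitian.eigenvectorUnitary hA : Matrix n n ℂ)) q p
        = (1 : Matrix n n ℂ) q p := by rw [h]
    simpa [Matrix.mul_apply, Matrix.star_eq_conjTranspose, Matrix.conjTranspose_apply,
      Matrix.one_apply] using h2
  calc ∑ j, (starRingEnd ℂ) (hA.eigenvectorBasis j p) * hA.eigenvectorBasis j q
      = ∑ j, (Matrix.IsHermitian.eigenvectorUnitary hA : Matrix n n ℂ) q j
          * (starRingEnd ℂ) ((Matrix.IsHermitian.eigenvectorUnitary hA : Matrix n n ℂ) p j) := by
        refine Finset.sum_congr rfl fun j _ => ?_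
        simp only [Matrix.IsHermitian.eigenvectorUnitary_apply]
        ring
    _ = if p = q then 1 else 0 := by
        rw [h1]
        by_cases hpq : p = q
        · subst hpq; simp
        · rw [if_neg (fun hc => hpq hc.symm), if_neg hpq]

/-- Entrywise spectral decomposition of a Hermitian matrix. -/
theorem spec_entry {n : Type*} [Fintype n] [DecidableEq n] {A : Matrix n n ℂ}
    (hA : A.IsHermitian) (p q : n) :
    A p q = ∑ j, ((hA.eigenvalues j : ℝ) : ℂ)
      * (hA.eigenvectorBasis j p * (starRingEnd ℂ) (hA.eigenvectorBasis j q)) := by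
  conv_lhs => rw [hA.spectral_theorem, Unitary.conjStarAlgAut_apply]
  rw [Matrix.mul_apply]
  refine Finset.sum_congr rfl fun j _ => ?_
  have h1 : (((Matrix.IsHermitian.eigenvectorUnitary hA : Matrix n n ℂ)
      * (Matrix.diagonal (RCLike.ofReal ∘ hA.eigenvalues) : Matrix n n ℂ)) : Matrix n n ℂ) p j
      = hA.eigenvectorBasis j p * ((hA.eigenvalues j : ℝ) : ℂ) := by
    rw [Matrix.mul_apply, Finset.sum_eq_single j]
    · rw [Matrix.diagonal_apply_eq]
      simp [Matrix.IsHermitian.eigenvectorUnitary_apply]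
    · intro k _ hne
      rw [Matrix.diagonal_apply_ne _ hne, mul_zero]
    · intro hcc; exact absurd (Finset.mem_univ _) hcc
  have h2 : (star (Matrix.IsHermitian.eigenvectorUnitary hA : Matrix n n ℂ)) j q
      = (starRingEnd ℂ) (hA.eigenvectorBasis j q) := by
    simp [Matrix.star_eq_conjTranspose, Matrix.conjTranspose_apply,
      Matrix.IsHermitian.eigenvectorUnitary_apply]
  rw [h1, h2]
  ring

/-- The Gram-type relation for the spectral data of a Hermitian matrix admitting a
vector decomposition `M = ∑ᵢ zᵢ zᵢ*`. -/
theorem Hr_of_decomp {n κ : Type*} [Fintype n] [DecidableEq n] [Fintype κ]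
    {M : Matrix n n ℂ} (hM : M.IsHermitian) (z : κ → n → ℂ)
    (hdec : ∀ p q, M p q = ∑ i, z i p * (starRingEnd ℂ) (z i q)) :
    ∀ j j', ∑ i, cdot (fun p => hM.eigenvectorBasis j p) (z i)
        * (starRingEnd ℂ) (cdot (fun p => hM.eigenvectorBasis j' p) (z i))
      = if j = j' then (hM.eigenvalues j : ℂ) else 0 := by
  intro j j'
  calc ∑ i, cdot (fun p => hM.eigenvectorBasis j p) (z i)
        * (starRingEnd ℂ) (cdot (fun p => hM.eigenvectorBasis j' p) (z i))
      = ∑ i, ∑ p, ∑ q, (starRingEnd ℂ) (hM.eigenvectorBasis j p) * hM.eigenvectorBasis j' q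
          * (z i p * (starRingEnd ℂ) (z i q)) := by
        refine Finset.sum_congr rfl fun i _ => ?_
        rw [cdot, cdot, map_sum, Finset.sum_mul_sum]
        refine Finset.sum_congr rfl fun p _ => Finset.sum_congr rfl fun q _ => ?_
        rw [_root_.map_mul, Complex.conj_conj]
        ring
    _ = ∑ p, ∑ q, (starRingEnd ℂ) (hM.eigenvectorBasis j p) * hM.eigenvectorBasis j' q
          * M p q := by
        rw [Finset.sum_comm]
        refine Finset.sum_congr rfl fun p _ => ?_
        rw [Finset.sum_comm]
        refine Finset.sum_congr rfl fun q _ => ?_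
        rw [hdec p q, Finset.mul_sum]
    _ = ∑ p, (starRingEnd ℂ) (hM.eigenvectorBasis j p)
          * ((hM.eigenvalues j' : ℂ) * hM.eigenvectorBasis j' p) := by
        refine Finset.sum_congr rfl fun p _ => ?_
        have hmv : ∑ q, M p q * hM.eigenvectorBasis j' q
            = (hM.eigenvalues j' : ℂ) * hM.eigenvectorBasis j' p := by
          have h := congrFun (hM.mulVec_eigenvectorBasis j') p
          simpa [Matrix.mulVec, dotProduct, Pi.smul_apply, Complex.real_smul] using h
        calc ∑ q, (starRingEnd ℂ) (hM.eigenvectorBasis j p) * hM.eigenvectorBasis j' q * M p q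
            = (starRingEnd ℂ) (hM.eigenvectorBasis j p)
                * ∑ q, M p q * hM.eigenvectorBasis j' q := by
              rw [Finset.mul_sum]
              exact Finset.sum_congr rfl fun q _ => by ring
          _ = _ := by rw [hmv]
    _ = (hM.eigenvalues j' : ℂ) * cdot (fun p => hM.eigenvectorBasis j p)
          (fun p => hM.eigenvectorBasis j' p) := by
        rw [cdot, Finset.mul_sum]
        exact Finset.sum_congr rfl fun p _ => by ring
    _ = if j = j' then (hM.eigenvalues j : ℂ) else 0 := by
        rw [onb_cdot]
        by_cases h : j = j'
        · subst h; simp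
        · rw [if_neg h, mul_zero, if_neg h]

end Stmt14

/-- For a separable state `ρ` (a convex combination of product
states), `S(ρ_B) ≤ S(ρ)` and hence the mutual information satisfies
`I(ρ) = S(ρ_A) + S(ρ_B) − S(ρ) ≤ S(ρ_A)`. -/
theorem stmt_14 (a b : ℕ) (ρ : Matrix (Fin a × Fin b) (Fin a × Fin b) ℂ)
    (hρ : ρ.PosSemidef) (htr : ρ.trace = 1)
    (hsep : ∃ (m : ℕ) (q : Fin m → ℝ) (σ : Fin m → Matrix (Fin a) (Fin a) ℂ)
      (τ : Fin m → Matrix (Fin b) (Fin b) ℂ),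
      (∀ k, 0 ≤ q k) ∧ ∑ k, q k = 1 ∧
      (∀ k, (σ k).PosSemidef ∧ (σ k).trace = 1) ∧
      (∀ k, (τ k).PosSemidef ∧ (τ k).trace = 1) ∧
      ρ = ∑ k, (q k : ℂ) • (σ k ⊗ₖ τ k))
    (hA : (ptraceB ρ).IsHermitian) (hB : (ptraceA ρ).IsHermitian) :
    vN hB ≤ vN hρ.1 ∧ vN hA + vN hB - vN hρ.1 ≤ vN hA := by
  classical
  obtain ⟨m, q, σ, τ, hq0, hq1, hσ, hτ, hρeq⟩ := hsep
  -- the pure-product decomposition coming from the spectral decompositions of σ and τ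
  set X : (Fin m × Fin a × Fin b) → Fin a → ℂ :=
    fun i s' => (hσ i.1).1.1.eigenvectorBasis i.2.1 s' with hX
  set Y : (Fin m × Fin a × Fin b) → Fin b → ℂ :=
    fun i t' => (hτ i.1).1.1.eigenvectorBasis i.2.2 t' with hY
  set ν : (Fin m × Fin a × Fin b) → ℝ :=
    fun i => q i.1 * ((hσ i.1).1.1.eigenvalues i.2.1 * (hτ i.1).1.1.eigenvalues i.2.2) with hν
  set W : (Fin m × Fin a × Fin b) → Fin b → ℂ :=
    fun i t' => (Real.sqrt (ν i) : ℂ) * Y i t' with hW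
  have hν0 : ∀ i, 0 ≤ ν i := fun i =>
    mul_nonneg (hq0 i.1) (mul_nonneg ((hσ i.1).1.eigenvalues_nonneg i.2.1)
      ((hτ i.1).1.eigenvalues_nonneg i.2.2))
  have hX1 : ∀ i, ∑ s, (starRingEnd ℂ) (X i s) * X i s = 1 := by
    intro i
    have h := Stmt14.onb_cdot ((hσ i.1).1.1.eigenvectorBasis) i.2.1 i.2.1
    rw [if_pos rfl] at h
    simpa [Stmt14.cdot, hX] using h
  have hz : ∀ p q' : Fin a × Fin b, ρ p q'
      = ∑ i, (X i p.1 * W i p.2) * (starRingEnd ℂ) (X i q'.1 * W i q'.2) := by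
    intro p q'
    have hterm : ∀ i, (X i p.1 * W i p.2) * (starRingEnd ℂ) (X i q'.1 * W i q'.2)
        = (q i.1 : ℂ)
          * ((((hσ i.1).1.1.eigenvalues i.2.1 : ℝ) : ℂ)
            * (X i p.1 * (starRingEnd ℂ) (X i q'.1)))
          * ((((hτ i.1).1.1.eigenvalues i.2.2 : ℝ) : ℂ)
            * (Y i p.2 * (starRingEnd ℂ) (Y i q'.2))) := by
      intro i
      have hsq : (Real.sqrt (ν i) : ℂ) * (Real.sqrt (ν i) : ℂ)
          = (q i.1 : ℂ) * ((((hσ i.1).1.1.eigenvalues i.2.1 : ℝ) : ℂ)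
            * (((hτ i.1).1.1.eigenvalues i.2.2 : ℝ) : ℂ)) := by
        rw [← Complex.ofReal_mul, Real.mul_self_sqrt (hν0 i), hν]
        push_cast
        ring
      calc (X i p.1 * W i p.2) * (starRingEnd ℂ) (X i q'.1 * W i q'.2)
          = ((Real.sqrt (ν i) : ℂ) * (Real.sqrt (ν i) : ℂ))
            * ((X i p.1 * (starRingEnd ℂ) (X i q'.1))
              * (Y i p.2 * (starRingEnd ℂ) (Y i q'.2))) := by
            rw [hW]
            simp only [_root_.map_mul, Complex.conj_ofReal]
            ring
        _ = _ := by rw [hsq]; ring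
    calc ρ p q' = ∑ k, (q k : ℂ) * (σ k p.1 q'.1 * τ k p.2 q'.2) := by
          rw [hρeq, Matrix.sum_apply]
          refine Finset.sum_congr rfl fun k _ => ?_
          rw [Matrix.smul_apply, Matrix.kroneckerMap_apply, smul_eq_mul]
      _ = ∑ k, ∑ s, ∑ t, (q k : ℂ)
            * ((((hσ k).1.1.eigenvalues s : ℝ) : ℂ)
              * ((hσ k).1.1.eigenvectorBasis s p.1
                * (starRingEnd ℂ) ((hσ k).1.1.eigenvectorBasis s q'.1)))
            * ((((hτ k).1.1.eigenvalues t : ℝ) : ℂ)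
              * ((hτ k).1.1.eigenvectorBasis t p.2
                * (starRingEnd ℂ) ((hτ k).1.1.eigenvectorBasis t q'.2))) := by
          refine Finset.sum_congr rfl fun k _ => ?_
          rw [Stmt14.spec_entry (hσ k).1.1 p.1 q'.1, Stmt14.spec_entry (hτ k).1.1 p.2 q'.2]
          rw [Finset.sum_mul_sum, Finset.mul_sum]
          refine Finset.sum_congr rfl fun s _ => ?_
          rw [Finset.mul_sum]
          exact Finset.sum_congr rfl fun t _ => by ring
      _ = ∑ i : Fin m × Fin a × Fin b,
            (X i p.1 * W i p.2) * (starRingEnd ℂ) (X i q'.1 * W i q'.2) := by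
          rw [Fintype.sum_prod_type]
          refine Finset.sum_congr rfl fun k _ => ?_
          rw [Fintype.sum_prod_type]
          refine Finset.sum_congr rfl fun s _ => Finset.sum_congr rfl fun t _ => ?_
          exact (hterm (k, s, t)).symm
  have hw : ∀ t t', (ptraceA ρ) t t' = ∑ i, W i t * (starRingEnd ℂ) (W i t') := by
    intro t t'
    calc (ptraceA ρ) t t' = ∑ s, ρ (s, t) (s, t') := rfl
      _ = ∑ s, ∑ i, (X i s * W i t) * (starRingEnd ℂ) (X i s * W i t') := by
          refine Finset.sum_congr rfl fun s _ => ?_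
          exact hz (s, t) (s, t')
      _ = ∑ i, ∑ s, ((starRingEnd ℂ) (X i s) * X i s) * (W i t * (starRingEnd ℂ) (W i t')) := by
          rw [Finset.sum_comm]
          refine Finset.sum_congr rfl fun i _ => Finset.sum_congr rfl fun s _ => ?_
          rw [_root_.map_mul]
          ring
      _ = ∑ i, W i t * (starRingEnd ℂ) (W i t') := by
          refine Finset.sum_congr rfl fun i _ => ?_
          rw [← Finset.sum_mul, hX1 i, one_mul]
  have HrA := Stmt14.Hr_of_decomp hρ.1
    (fun i => fun p : Fin a × Fin b => X i p.1 * W i p.2) (fun p q' => hz p q')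
  have HμB := Stmt14.Hr_of_decomp hB W hw
  have hcore := Stmt14.core (a := a) (b := b) (κ := Fin m × Fin a × Fin b) X W hX1
    (fun j p => hρ.1.eigenvectorBasis j p) hρ.1.eigenvalues
    (Stmt14.onb_complete hρ.1) (fun j j' => Stmt14.onb_cdot _ j j') HrA
    (fun l t => hB.eigenvectorBasis l t) hB.eigenvalues
    (Stmt14.onb_complete hB) (fun l l' => Stmt14.onb_cdot _ l l') HμB
  have hvN1 : vN hB = ∑ l, Real.negMulLog (hB.eigenvalues l) := by
    simp [vN, Real.negMulLog, neg_mul, Finset.sum_neg_distrib]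
  have hvN2 : vN hρ.1 = ∑ j, Real.negMulLog (hρ.1.eigenvalues j) := by
    simp [vN, Real.negMulLog, neg_mul, Finset.sum_neg_distrib]
  have hmain : vN hB ≤ vN hρ.1 := by
    rw [hvN1, hvN2]
    exact hcore
  exact ⟨hmain, by linarith⟩
end

section
/- Define for y ∈ [0, 3/4] the maximum of z(p₂,p₄) = 1 − 2y + (√p₂ − √p₄)² over (p₂,p₄) subject to the ordering constraints p₁ = 1−y ≥ p₂ ≥ p₃ ≥ p₄ ≥ 0 and p₁+p₂+p₃+p₄ = 1 (so p₃ = y − p₂ − p₄ ≥ 0). Then the maximum equals 1−y if y ∈ [0, 1/2] (attained at (p₂,p₄) = (y,0)), equals 2−3y if y ∈ [1/2, 2/3] (attained at (1−y, 0)... i.e., p₂ = 1−y, p₄ = 0), and the maximum of max{0, z} is 0 if y ∈ [2/3, 3/4]. -/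
/-!
On the feasible set `p₄ ≤ p₂`, and `√p₂ √p₄ ≥ p₄` gives `(√p₂ - √p₄)² ≤ p₂`, with equality
at `p₄ = 0`. So the objective is at most `1 - 2y + p₂`, and the largest feasible `p₂` is
`min y (1 - y)`, attained with `p₄ = 0` as long as `p₃ = y - p₂ ≤ p₂`, i.e. for `y ≤ 2/3`.
Beyond `2/3` the bound `1 - 2y + (1 - y) = 2 - 3y` is nonpositive, and `0` is attained at
`p₂ = p₃ = p₄ = y/3`, which is feasible for `y ≤ 3/4`.
-/

open Real Set

namespace EntanglementBound

def feasibleSet (y : ℝ) : Set (ℝ × ℝ) :=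
  {q | 0 ≤ q.2 ∧ q.2 ≤ y - q.1 - q.2 ∧ y - q.1 - q.2 ≤ q.1 ∧ q.1 ≤ 1 - y}

noncomputable def objective (y : ℝ) (q : ℝ × ℝ) : ℝ :=
  1 - 2 * y + (√q.1 - √q.2) ^ 2

theorem sq_sqrt_sub_sqrt_le {a b : ℝ} (hb : 0 ≤ b) (hba : b ≤ a) : (√a - √b) ^ 2 ≤ a := by
  have hprod : b ≤ √a * √b := by
    calc b = √b * √b := (mul_self_sqrt hb).symm
      _ ≤ √a * √b := mul_le_mul_of_nonneg_right (sqrt_le_sqrt hba) (sqrt_nonneg b)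
  have hexp : (√a - √b) ^ 2 = a - 2 * (√a * √b) + b := by
    rw [sub_sq, sq_sqrt (hb.trans hba), sq_sqrt hb]; ring
  linarith

variable {y : ℝ}

theorem snd_le_fst_of_mem {q : ℝ × ℝ} (hq : q ∈ feasibleSet y) : q.2 ≤ q.1 := by
  obtain ⟨-, h₂, h₃, -⟩ := hq
  linarith

theorem objective_le_of_mem {q : ℝ × ℝ} (hq : q ∈ feasibleSet y) :
    objective y q ≤ 1 - 2 * y + q.1 :=
  add_le_add_right (sq_sqrt_sub_sqrt_le hq.1 (snd_le_fst_of_mem hq)) _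

theorem fst_le_of_mem {q : ℝ × ℝ} (hq : q ∈ feasibleSet y) : q.1 ≤ y ∧ q.1 ≤ 1 - y := by
  obtain ⟨h₁, h₂, -, h₄⟩ := hq
  exact ⟨by linarith, h₄⟩

theorem objective_fst_zero {a : ℝ} (ha : 0 ≤ a) : objective y (a, 0) = 1 - 2 * y + a := by
  simp [objective, sq_sqrt ha]

theorem objective_diag (t : ℝ) : objective y (t, t) = 1 - 2 * y := by
  simp [objective]

theorem isGreatest_objective {a : ℝ} (ha : (a, 0) ∈ feasibleSet y)
    (hmax : ∀ q ∈ feasibleSet y, q.1 ≤ a) :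
    IsGreatest (objective y '' feasibleSet y) (objective y (a, 0)) := by
  have ha₀ : 0 ≤ a := by obtain ⟨-, h₂, h₃, -⟩ := ha; dsimp only at h₂ h₃; linarith
  refine ⟨mem_image_of_mem _ ha, forall_mem_image.2 fun q hq => ?_⟩
  rw [objective_fst_zero ha₀]
  linarith [objective_le_of_mem hq, hmax q hq]

end EntanglementBound

open EntanglementBound in
/-- maximum of `z(p₂,p₄) = 1 − 2y + (√p₂ − √p₄)²` over the feasible
set `{0 ≤ p₄ ≤ p₃ ≤ p₂ ≤ 1−y, p₃ = y − p₂ − p₄}`: it equals `1 − y` for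
`y ∈ [0,1/2]` (attained at `(y,0)`), `2 − 3y` for `y ∈ [1/2,2/3]` (attained at
`(1−y,0)`), and the maximum of `max{0,z}` is `0` for `y ∈ [2/3,3/4]`. -/
theorem stmt_18 (y : ℝ) (hy : y ∈ Set.Icc (0 : ℝ) (3 / 4))
    (F : Set (ℝ × ℝ))
    (hF : F = {q : ℝ × ℝ | 0 ≤ q.2 ∧ q.2 ≤ y - q.1 - q.2 ∧
      y - q.1 - q.2 ≤ q.1 ∧ q.1 ≤ 1 - y})
    (z : ℝ × ℝ → ℝ)
    (hz : z = fun q => 1 - 2 * y + (Real.sqrt q.1 - Real.sqrt q.2) ^ 2) :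
    (y ≤ 1 / 2 → IsGreatest (z '' F) (1 - y) ∧ (y, 0) ∈ F ∧ z (y, 0) = 1 - y) ∧
    (y ∈ Set.Icc (1 / 2 : ℝ) (2 / 3) →
      IsGreatest (z '' F) (2 - 3 * y) ∧ (1 - y, 0) ∈ F ∧ z (1 - y, 0) = 2 - 3 * y) ∧
    (2 / 3 ≤ y → IsGreatest ((fun q => max 0 (z q)) '' F) 0) := by
  obtain ⟨hy₀, hy₃₄⟩ := hy
  change F = feasibleSet y at hF
  change z = objective y at hz
  subst hF hz
  refine ⟨fun hy₁₂ => ?_, fun ⟨hy₁₂, hy₂₃⟩ => ?_, fun hy₂₃ => ?_⟩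
  · have hmem : (y, 0) ∈ feasibleSet y := ⟨le_rfl, by simp, by simp [hy₀], by linarith⟩
    have hval : objective y (y, 0) = 1 - y := by rw [objective_fst_zero hy₀]; ring
    exact ⟨hval ▸ isGreatest_objective hmem fun q hq => (fst_le_of_mem hq).1, hmem, hval⟩
  · have hmem : (1 - y, 0) ∈ feasibleSet y :=
      ⟨le_rfl, by dsimp only; linarith, by dsimp only; linarith, by simp⟩
    have hval : objective y (1 - y, 0) = 2 - 3 * y := by
      rw [objective_fst_zero (by linarith)]; ring
    exact ⟨hval ▸ isGreatest_objective hmem fun q hq => (fst_le_of_mem hq).2, hmem, hval⟩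
  · have hmem : (y / 3, y / 3) ∈ feasibleSet y := by
      refine ⟨?_, ?_, ?_, ?_⟩ <;> dsimp only <;> linarith
    refine ⟨⟨_, hmem, ?_⟩, forall_mem_image.2 fun q hq => max_le le_rfl ?_⟩
    · simp only [objective_diag]
      exact max_eq_left (by linarith)
    · linarith [objective_le_of_mem hq, (fst_le_of_mem hq).2]
end
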